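/- arXiv:1409.2070 — 3 statements merged into one kernel-verified Lean document; each statement's English description precedes it below -/
import Mathlib

section
/- Let {n_k}_{k≥1} be integers with n_k ≥ 2 and c_k ∈ (0, 1/n_k] satisfy lim_{k→∞} (log c_k)/(log(c_1⋯c_k)) = 0. Then for every Moran set E ∈ M(J, {n_k}, {c_k}), dim_qA E = lim_{δ→0} limsup_{q→∞} max_{1 ≤ p ≤ l_{q,δ}} (log(n_p⋯n_q))/(−log(c_p⋯c_q)), where l_{q,δ} = max{1 ≤ p ≤ q : (log(c_p⋯c_q))/(log(c_1⋯c_q)) > δ}. -/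
open Filter Topology Metric Set

/-- `coverNum X r R` : the smallest number of closed balls of radius `r` needed to cover
`X ∩ B` over all closed balls `B` of radius `R`. -/
noncomputable def coverNum (X : Type*) [MetricSpace X] (r R : ℝ) : ℕ :=
  sSup {n : ℕ | ∃ x : X, n = sInf {m : ℕ | ∃ s : Finset X,
    s.card = m ∧ Metric.closedBall x R ⊆ ⋃ y ∈ s, Metric.closedBall y r}}

/-- `hFun X δ = inf {α ≥ 0 : ∃ b, c > 0, N_{r,R}(X) ≤ c (R/r)^α for all 0 < r < r^(1-δ) ≤ R < b}`. -/
noncomputable def hFun (X : Type*) [MetricSpace X] (δ : ℝ) : ℝ :=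
  sInf {α : ℝ | 0 ≤ α ∧ ∃ b c : ℝ, 0 < b ∧ 0 < c ∧ ∀ r R : ℝ,
    0 < r → r < r ^ (1 - δ) → r ^ (1 - δ) ≤ R → R < b →
      (coverNum X r R : ℝ) ≤ c * (R / r) ^ α}

/-- The quasi-Assouad dimension `dim_qA X = lim_{δ → 0⁺} h_X(δ)`; since `h_X` is
non-increasing in `δ`, this limit equals the supremum over `δ ∈ (0,1)`. -/
noncomputable def dimqA (X : Type*) [MetricSpace X] : ℝ :=
  sSup (hFun X '' Set.Ioo 0 1)

/-- A word `i₁ ⋯ i_k` (as a list, head = `i₁`) is admissible for the branching numbers `n`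
if `1 ≤ i_t ≤ n t` for every `t`. -/
def MoranAdmissible (n : ℕ → ℕ) (w : List ℕ) : Prop :=
  ∀ t : ℕ, t < w.length → 1 ≤ w.getD t 0 ∧ w.getD t 0 ≤ n (t + 1)

/-- `F ∈ M(J, {n_k}, {c_k})` : `F` is a Moran set with initial closed interval `J`,
branching numbers `n_k` and contraction ratios `c_k` (indices start at `1`). -/
def IsMoranSet (J : Set ℝ) (n : ℕ → ℕ) (c : ℕ → ℝ) (F : Set ℝ) : Prop :=
  ∃ A B : ℝ, A < B ∧ J = Set.Icc A B ∧
  ∃ a b : List ℕ → ℝ,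
    a [] = A ∧ b [] = B ∧
    (∀ w : List ℕ, MoranAdmissible n w → ∀ j : ℕ, 1 ≤ j → j ≤ n (w.length + 1) →
      a w ≤ a (w ++ [j]) ∧ a (w ++ [j]) < b (w ++ [j]) ∧ b (w ++ [j]) ≤ b w ∧
      b (w ++ [j]) - a (w ++ [j]) = c (w.length + 1) * (b w - a w)) ∧
    (∀ w : List ℕ, MoranAdmissible n w → ∀ j j' : ℕ, 1 ≤ j → j ≤ n (w.length + 1) →
      1 ≤ j' → j' ≤ n (w.length + 1) → j ≠ j' →
      interior (Set.Icc (a (w ++ [j])) (b (w ++ [j]))) ∩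
        interior (Set.Icc (a (w ++ [j'])) (b (w ++ [j']))) = ∅) ∧
    F = ⋂ k : ℕ, ⋃ w ∈ {w : List ℕ | MoranAdmissible n w ∧ w.length = k},
      Set.Icc (a w) (b w)

/-- `s_{p,q} = log (n_p ⋯ n_q) / (- log (c_p ⋯ c_q))`. -/
noncomputable def spq (n : ℕ → ℕ) (c : ℕ → ℝ) (p q : ℕ) : ℝ :=
  Real.log (∏ i ∈ Finset.Icc p q, (n i : ℝ)) / (-Real.log (∏ i ∈ Finset.Icc p q, c i))

/-- `l_{q,δ} = max {1 ≤ p ≤ q : log (c_p ⋯ c_q) / log (c_1 ⋯ c_q) > δ}`. -/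
noncomputable def lIdx (c : ℕ → ℝ) (δ : ℝ) (q : ℕ) : ℕ :=
  sSup {p : ℕ | 1 ≤ p ∧ p ≤ q ∧
    δ < Real.log (∏ i ∈ Finset.Icc p q, c i) / Real.log (∏ i ∈ Finset.Icc 1 q, c i)}

/-!
The basic intervals of level `k` have length `λ_k = |J| · exp (-γ_k)` with `γ_k = -log (c₁ ⋯ c_k)`
(`basicLength`, `logScale`), and distinct ones of the same level are separated. Hence, when
`λ_q ≤ r` and `R ≤ λ_p`, the part of `E` in a ball of radius `R` meets at most four intervals of
level `p` and is covered by `4 n_{p+1} ⋯ n_q` balls of radius `r`. Conversely, a ball of radius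
`R ≥ λ_p` centred at a point of `E` in a level-`p` interval contains points of `E` in each of its
`n_{p+1} ⋯ n_q` subintervals of level `q`, and a ball of radius `λ_q` meets at most four of these
subintervals. After taking logarithms, `log N_{r,R}(E) / log (R / r)` is `s_{p+1,q}` up to errors
controlled by `log c_k / log (c₁ ⋯ c_k) → 0`, and the constraint `R ≥ r ^ (1 - δ)` becomes
`p + 1 ≤ l_{q,δ'}` for `δ'` close to `δ`. This gives `h_E δ ≤ Φ δ'` for `δ' < δ` and `Φ δ ≤ h_E (δ / 2)`, where `Φ` is the
limsup of the statement (`limsupMaxSpq`); since `Φ` is antitone, both tend to the same limit at `0`.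
-/

section Words

variable {n : ℕ → ℕ}

lemma moranAdmissible_nil (n : ℕ → ℕ) : MoranAdmissible n [] := fun _ ht => absurd ht (by simp)

lemma MoranAdmissible.of_prefix {u w : List ℕ} (hw : MoranAdmissible n w) (huw : u <+: w) :
    MoranAdmissible n u := by
  obtain ⟨t, rfl⟩ := huw
  intro i hi
  simpa only [List.getD_append _ _ _ _ hi] using hw i (by simp; omega)

lemma moranAdmissible_concat {u : List ℕ} {j : ℕ} :
    MoranAdmissible n (u ++ [j]) ↔ MoranAdmissible n u ∧ 1 ≤ j ∧ j ≤ n (u.length + 1) := by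
  refine ⟨fun h => ⟨h.of_prefix (List.prefix_append _ _), ?_⟩, fun ⟨hu, hj⟩ i hi => ?_⟩
  · simpa using h u.length (by simp)
  · rcases Nat.lt_succ_iff_lt_or_eq.mp (by simpa using hi) with hi | rfl
    · simpa only [List.getD_append _ _ _ _ hi] using hu i hi
    · simpa using hj

def moranDescendants (n : ℕ → ℕ) (u : List ℕ) : ℕ → Finset (List ℕ)
  | 0 => {u}
  | m + 1 => (moranDescendants n u m).biUnion fun v =>
      (Finset.Icc 1 (n (v.length + 1))).image fun j => v ++ [j]

lemma length_of_mem_moranDescendants {u v : List ℕ} {m : ℕ} (hv : v ∈ moranDescendants n u m) :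
    v.length = u.length + m := by
  induction m generalizing v with
  | zero => simp_all [moranDescendants]
  | succ m ih =>
    simp only [moranDescendants, Finset.mem_biUnion, Finset.mem_image] at hv
    obtain ⟨v, hv, j, -, rfl⟩ := hv
    simp [ih hv, add_assoc]

lemma mem_moranDescendants {u v : List ℕ} {m : ℕ} (hu : MoranAdmissible n u) :
    v ∈ moranDescendants n u m ↔ MoranAdmissible n v ∧ u <+: v ∧ v.length = u.length + m := by
  induction m generalizing v with
  | zero =>
    simp only [moranDescendants, Finset.mem_singleton, add_zero]
    exact ⟨by rintro rfl; exact ⟨hu, List.prefix_refl _, rfl⟩,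
      fun ⟨_, huv, hlen⟩ => (huv.eq_of_length hlen.symm).symm⟩
  | succ m ih =>
    simp only [moranDescendants, Finset.mem_biUnion, Finset.mem_image, Finset.mem_Icc, ih]
    constructor
    · rintro ⟨v, ⟨hv, huv, hlen⟩, j, hj, rfl⟩
      exact ⟨moranAdmissible_concat.mpr ⟨hv, hj⟩, huv.trans (List.prefix_append _ _),
        by simp [hlen, add_assoc]⟩
    · rintro ⟨hv, huv, hlen⟩
      obtain rfl | ⟨v, j, rfl⟩ := List.eq_nil_or_concat' v
      · simp at hlen
      have huv' : u <+: v := (List.prefix_concat_iff.mp huv).resolve_left fun h => by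
        simp [h] at hlen
      obtain ⟨hv, hj⟩ := moranAdmissible_concat.mp hv
      exact ⟨v, ⟨hv, huv', by simp at hlen; omega⟩, j, hj, rfl⟩

lemma mem_moranDescendants_nil {w : List ℕ} {k : ℕ} :
    w ∈ moranDescendants n [] k ↔ MoranAdmissible n w ∧ w.length = k := by
  simp [mem_moranDescendants (moranAdmissible_nil n)]

lemma card_moranDescendants (u : List ℕ) (m : ℕ) :
    (moranDescendants n u m).card = ∏ i ∈ Finset.Ioc u.length (u.length + m), n i := by
  induction m with
  | zero => simp [moranDescendants]
  | succ m ih =>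
    rw [moranDescendants, Finset.card_biUnion, Finset.sum_congr rfl fun v hv => by
      rw [Finset.card_image_of_injective _ fun j j' h => by simpa using h, Nat.card_Icc,
        add_tsub_cancel_right, length_of_mem_moranDescendants hv],
      Finset.sum_const, ih, smul_eq_mul, ← add_assoc, Finset.prod_Ioc_succ_top (by omega)]
    intro v _ v' _ hne
    simp only [Function.onFun, Finset.disjoint_left, Finset.mem_image]
    rintro _ ⟨j, -, rfl⟩ ⟨j', -, h⟩
    exact hne (List.append_inj_left' h rfl).symm

end Words

lemma card_le_of_separated {ι : Type*} (S : Finset ι) (f : ι → ℝ) {ℓ u : ℝ} {k : ℕ} (hℓ : 0 < ℓ)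
    (hsep : ∀ i ∈ S, ∀ j ∈ S, i ≠ j → ℓ ≤ |f i - f j|)
    (hmem : ∀ i ∈ S, f i ∈ Icc u (u + k * ℓ)) : S.card ≤ k + 1 := by
  let g : ι → ℤ := fun i => ⌊(f i - u) / ℓ⌋
  have hmaps : Set.MapsTo g S (Finset.Icc 0 (k : ℤ)) := fun i hi => by
    obtain ⟨h₁, h₂⟩ := hmem i hi
    simp only [Finset.coe_Icc, Set.mem_Icc, Int.floor_nonneg, Int.floor_le_iff, g]
    constructor
    · exact div_nonneg (by linarith) hℓ.le
    · rw [div_lt_iff₀ hℓ]; push_cast; linarith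
  have hinj : Set.InjOn g S := fun i hi j hj hg => by
    by_contra hne
    have h := Int.abs_sub_lt_one_of_floor_eq_floor hg
    rw [← sub_div, sub_sub_sub_cancel_right, abs_div, abs_of_pos hℓ, div_lt_one hℓ] at h
    exact (hsep i hi j hj hne).not_gt h
  simpa using Finset.card_le_card_of_injOn g hmaps hinj

lemma le_or_le_of_interior_Icc_inter_eq_empty {a b a' b' : ℝ} (hab : a < b) (hab' : a' < b')
    (h : interior (Icc a b) ∩ interior (Icc a' b') = ∅) : b ≤ a' ∨ b' ≤ a := by
  rw [interior_Icc, interior_Icc, Ioo_inter_Ioo, Ioo_eq_empty_iff, max_lt_iff, lt_min_iff,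
    lt_min_iff] at h
  by_contra! h'
  exact h ⟨⟨hab, h'.2⟩, h'.1, hab'⟩

lemma exists_lt_le_of_tendsto_zero {u : ℕ → ℝ} (hu : Tendsto u atTop (𝓝 0)) {t : ℝ} (ht : 0 < t)
    (h0 : t ≤ u 0) : ∃ k, u (k + 1) < t ∧ t ≤ u k := by
  by_contra! h
  have hle : ∀ k, t ≤ u k := fun k => by
    induction k with
    | zero => exact h0
    | succ k ih => exact not_lt.mp fun hk => (h k hk).not_ge ih
  obtain ⟨N, hN⟩ := (hu.eventually (gt_mem_nhds ht)).exists
  exact (hle N).not_gt hN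

lemma csSup_image_Ioo_le_of_le_half {f g : ℝ → ℝ} (hg : BddAbove (g '' Ioo 0 1))
    (hfg : ∀ δ ∈ Ioo (0 : ℝ) 1, f δ ≤ g (δ / 2)) : sSup (f '' Ioo 0 1) ≤ sSup (g '' Ioo 0 1) := by
  refine csSup_le ((nonempty_Ioo.mpr one_pos).image f) ?_
  rintro _ ⟨δ, hδ, rfl⟩
  exact (hfg δ hδ).trans (le_csSup hg ⟨δ / 2, ⟨by linarith [hδ.1], by linarith [hδ.2]⟩, rfl⟩)

section CoverNum

variable {X : Type*} [MetricSpace X] {r R : ℝ}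

lemma sInf_card_cover_le {x : X} {s : Finset X}
    (hcover : closedBall x R ⊆ ⋃ y ∈ s, closedBall y r) :
    sInf {m : ℕ | ∃ s : Finset X, s.card = m ∧ closedBall x R ⊆ ⋃ y ∈ s, closedBall y r}
      ≤ s.card :=
  Nat.sInf_le ⟨s, rfl, hcover⟩

lemma coverNum_le {K : ℕ}
    (hK : ∀ x : X, ∃ s : Finset X, s.card ≤ K ∧ closedBall x R ⊆ ⋃ y ∈ s, closedBall y r) :
    coverNum X r R ≤ K := by
  refine csSup_le' ?_
  rintro _ ⟨x, rfl⟩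
  obtain ⟨s, hs, hcover⟩ := hK x
  exact (sInf_card_cover_le hcover).trans hs

lemma le_mul_coverNum {K N m : ℕ} (x : X)
    (hK : ∀ x : X, ∃ s : Finset X, s.card ≤ K ∧ closedBall x R ⊆ ⋃ y ∈ s, closedBall y r)
    (hN : ∀ s : Finset X, closedBall x R ⊆ ⋃ y ∈ s, closedBall y r → N ≤ m * s.card) :
    N ≤ m * coverNum X r R := by
  have hbdd : BddAbove {m : ℕ | ∃ x : X, m = sInf {m : ℕ | ∃ s : Finset X,
      s.card = m ∧ closedBall x R ⊆ ⋃ y ∈ s, closedBall y r}} := by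
    refine ⟨K, ?_⟩
    rintro _ ⟨x, rfl⟩
    obtain ⟨s, hs, hcover⟩ := hK x
    exact (sInf_card_cover_le hcover).trans hs
  obtain ⟨s, -, hcover⟩ := hK x
  obtain ⟨s, hs, hcover⟩ : sInf {m : ℕ | ∃ s : Finset X,
      s.card = m ∧ closedBall x R ⊆ ⋃ y ∈ s, closedBall y r} ∈ _ := Nat.sInf_mem ⟨_, s, rfl, hcover⟩
  exact (hN s hcover).trans (Nat.mul_le_mul_left m (hs ▸ le_csSup hbdd ⟨x, rfl⟩))

end CoverNum

def HasQuasiAssouadBound (X : Type*) [MetricSpace X] (δ α : ℝ) : Prop :=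
  ∃ b c : ℝ, 0 < b ∧ 0 < c ∧ ∀ r R : ℝ, 0 < r → r < r ^ (1 - δ) → r ^ (1 - δ) ≤ R → R < b →
    (coverNum X r R : ℝ) ≤ c * (R / r) ^ α

lemma hFun_eq (X : Type*) [MetricSpace X] (δ : ℝ) :
    hFun X δ = sInf {α : ℝ | 0 ≤ α ∧ HasQuasiAssouadBound X δ α} := rfl

noncomputable def maxSpq (n : ℕ → ℕ) (c : ℕ → ℝ) (δ : ℝ) (q : ℕ) : ℝ :=
  sSup {s : ℝ | ∃ p : ℕ, 1 ≤ p ∧ p ≤ lIdx c δ q ∧ s = spq n c p q}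

noncomputable def limsupMaxSpq (n : ℕ → ℕ) (c : ℕ → ℝ) (δ : ℝ) : ℝ :=
  limsup (fun q => maxSpq n c δ q) atTop

structure MoranParams where
  n : ℕ → ℕ
  c : ℕ → ℝ
  two_le_n : ∀ k, 1 ≤ k → 2 ≤ n k
  c_pos : ∀ k, 1 ≤ k → 0 < c k
  c_le_inv : ∀ k, 1 ≤ k → c k ≤ 1 / (n k : ℝ)

namespace MoranParams

variable (M : MoranParams) {p q k : ℕ}

noncomputable def logScale (k : ℕ) : ℝ := -Real.log (∏ i ∈ Finset.Icc 1 k, M.c i)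

lemma n_pos (hk : 1 ≤ k) : (0 : ℝ) < M.n k := by
  have := M.two_le_n k hk
  positivity

lemma c_le_half (hk : 1 ≤ k) : M.c k ≤ 1 / 2 := by
  refine (M.c_le_inv k hk).trans (one_div_le_one_div_of_le two_pos ?_)
  exact_mod_cast M.two_le_n k hk

lemma moranAdmissible_append_replicate {w : List ℕ} (hw : MoranAdmissible M.n w) (m : ℕ) :
    MoranAdmissible M.n (w ++ List.replicate m 1) := by
  induction m with
  | zero => simpa using hw
  | succ m ih =>
    rw [List.replicate_succ', ← List.append_assoc]
    exact moranAdmissible_concat.mpr ⟨ih, le_rfl, (M.two_le_n _ (by omega)).trans' one_le_two⟩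

lemma prod_c_pos (p q : ℕ) : 0 < ∏ i ∈ Finset.Ioc p q, M.c i :=
  Finset.prod_pos fun i hi => M.c_pos i (by simp at hi; omega)

lemma neg_log_prod_c (hpq : p ≤ q) :
    -Real.log (∏ i ∈ Finset.Ioc p q, M.c i) = M.logScale q - M.logScale p := by
  rw [logScale, logScale, show Finset.Icc 1 q = Finset.Ioc 0 q from rfl,
    show Finset.Icc 1 p = Finset.Ioc 0 p from rfl,
    ← Finset.prod_Ioc_consecutive _ (Nat.zero_le p) hpq,
    Real.log_mul (M.prod_c_pos 0 p).ne' (M.prod_c_pos p q).ne']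
  ring

lemma logScale_zero : M.logScale 0 = 0 := by simp [logScale]

lemma logScale_succ_sub (k : ℕ) : M.logScale (k + 1) - M.logScale k = -Real.log (M.c (k + 1)) := by
  rw [← M.neg_log_prod_c k.le_succ, Nat.Ioc_succ_singleton, Finset.prod_singleton]

lemma log_two_le_logScale_succ_sub (k : ℕ) : Real.log 2 ≤ M.logScale (k + 1) - M.logScale k := by
  rw [M.logScale_succ_sub, ← Real.log_inv, ← one_div]
  exact Real.log_le_log two_pos
    ((le_one_div two_pos (M.c_pos _ k.succ_pos)).mpr (M.c_le_half k.succ_pos))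

lemma logScale_strictMono : StrictMono M.logScale :=
  strictMono_nat_of_lt_succ fun k => by
    linarith [M.log_two_le_logScale_succ_sub k, Real.log_pos one_lt_two]

lemma logScale_nonneg (k : ℕ) : 0 ≤ M.logScale k :=
  M.logScale_zero ▸ M.logScale_strictMono.monotone (Nat.zero_le k)

lemma logScale_pos (hk : 1 ≤ k) : 0 < M.logScale k :=
  M.logScale_zero ▸ M.logScale_strictMono (by omega)

lemma tendsto_logScale_atTop : Tendsto M.logScale atTop atTop := by
  have hlin : ∀ k : ℕ, k * Real.log 2 ≤ M.logScale k := fun k => by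
    induction k with
    | zero => simp [logScale_zero]
    | succ k ih => push_cast; linarith [M.log_two_le_logScale_succ_sub k]
  exact tendsto_atTop_mono hlin
    (tendsto_natCast_atTop_atTop.atTop_mul_const (Real.log_pos one_lt_two))

lemma prod_n_pos (p q : ℕ) : (0 : ℝ) < ∏ i ∈ Finset.Ioc p q, (M.n i : ℝ) :=
  Finset.prod_pos fun i hi => M.n_pos (by simp at hi; omega)

lemma log_prod_n_nonneg (p q : ℕ) : 0 ≤ Real.log (∏ i ∈ Finset.Ioc p q, (M.n i : ℝ)) :=
  Real.log_nonneg <| Finset.one_le_prod fun i hi => by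
    exact_mod_cast (M.two_le_n i (by simp at hi; omega)).trans' one_le_two

lemma log_prod_n_le (hpq : p ≤ q) :
    Real.log (∏ i ∈ Finset.Ioc p q, (M.n i : ℝ)) ≤ M.logScale q - M.logScale p := by
  rw [← M.neg_log_prod_c hpq, ← Real.log_inv, ← Finset.prod_inv_distrib]
  refine Real.log_le_log (M.prod_n_pos p q) (Finset.prod_le_prod (fun i hi => ?_) fun i hi => ?_)
  all_goals have hi : 1 ≤ i := by simp at hi; omega
  · exact (M.n_pos hi).le
  · rw [le_inv_comm₀ (M.n_pos hi) (M.c_pos i hi), ← one_div]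
    exact M.c_le_inv i hi

lemma log_prod_n_add {m : ℕ} (hpm : p ≤ m) (hmq : m ≤ q) :
    Real.log (∏ i ∈ Finset.Ioc p q, (M.n i : ℝ)) =
      Real.log (∏ i ∈ Finset.Ioc p m, (M.n i : ℝ)) +
        Real.log (∏ i ∈ Finset.Ioc m q, (M.n i : ℝ)) := by
  rw [← Finset.prod_Ioc_consecutive _ hpm hmq,
    Real.log_mul (M.prod_n_pos p m).ne' (M.prod_n_pos m q).ne']

lemma spq_succ (hpq : p ≤ q) :
    spq M.n M.c (p + 1) q =
      Real.log (∏ i ∈ Finset.Ioc p q, (M.n i : ℝ)) / (M.logScale q - M.logScale p) := by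
  rw [spq, Finset.Icc_add_one_left_eq_Ioc, M.neg_log_prod_c hpq]

lemma spq_succ_nonneg (hpq : p < q) : 0 ≤ spq M.n M.c (p + 1) q := by
  rw [M.spq_succ hpq.le]
  exact div_nonneg (M.log_prod_n_nonneg p q) (sub_nonneg.mpr (M.logScale_strictMono hpq).le)

lemma spq_succ_le_one (hpq : p < q) : spq M.n M.c (p + 1) q ≤ 1 := by
  rw [M.spq_succ hpq.le]
  exact div_le_one_of_le₀ (M.log_prod_n_le hpq.le) (sub_nonneg.mpr (M.logScale_strictMono hpq).le)

lemma add_one_le_lIdx_iff {δ : ℝ} :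
    p + 1 ≤ lIdx M.c δ q ↔ p < q ∧ δ * M.logScale q < M.logScale q - M.logScale p := by
  have hratio : ∀ {m}, m < q → Real.log (∏ i ∈ Finset.Icc (m + 1) q, M.c i) /
      Real.log (∏ i ∈ Finset.Icc 1 q, M.c i) = (M.logScale q - M.logScale m) / M.logScale q := by
    intro m hmq
    rw [Finset.Icc_add_one_left_eq_Ioc, ← neg_div_neg_eq, M.neg_log_prod_c hmq.le]
    rfl
  set S := {p : ℕ | 1 ≤ p ∧ p ≤ q ∧ δ < Real.log (∏ i ∈ Finset.Icc p q, M.c i) /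
      Real.log (∏ i ∈ Finset.Icc 1 q, M.c i)}
  have hbdd : BddAbove S := ⟨q, fun _ h => h.2.1⟩
  constructor
  · intro hp
    have hne : S.Nonempty := Set.nonempty_iff_ne_empty.mpr fun h => by
      rw [show lIdx M.c δ q = sSup S from rfl, h, csSup_empty, bot_eq_zero] at hp
      omega
    obtain ⟨hm1, hmq, hm⟩ : lIdx M.c δ q ∈ S := Nat.sSup_mem hne hbdd
    obtain ⟨m, hm'⟩ : ∃ m, lIdx M.c δ q = m + 1 := ⟨lIdx M.c δ q - 1, by omega⟩
    rw [hm', hratio (by omega), lt_div_iff₀ (M.logScale_pos (by omega))] at hm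
    have := M.logScale_strictMono.monotone (show p ≤ m by omega)
    exact ⟨by omega, by linarith⟩
  · rintro ⟨hpq, hδ⟩
    refine le_csSup hbdd ⟨le_add_self, hpq, ?_⟩
    rw [hratio hpq, lt_div_iff₀ (M.logScale_pos (by omega))]
    exact hδ

lemma maxSpq_le {δ B : ℝ} (hB : 0 ≤ B)
    (h : ∀ p, p + 1 ≤ lIdx M.c δ q → spq M.n M.c (p + 1) q ≤ B) : maxSpq M.n M.c δ q ≤ B := by
  refine Real.sSup_le ?_ hB
  rintro _ ⟨p, hp, hpl, rfl⟩
  obtain ⟨p, rfl⟩ := Nat.exists_eq_add_of_le' hp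
  exact h p hpl

lemma maxSpq_le_one (δ : ℝ) (q : ℕ) : maxSpq M.n M.c δ q ≤ 1 :=
  M.maxSpq_le zero_le_one fun _ hp => M.spq_succ_le_one (M.add_one_le_lIdx_iff.mp hp).1

lemma maxSpq_nonneg (δ : ℝ) (q : ℕ) : 0 ≤ maxSpq M.n M.c δ q := by
  refine Real.sSup_nonneg ?_
  rintro _ ⟨p, hp, hpl, rfl⟩
  obtain ⟨p, rfl⟩ := Nat.exists_eq_add_of_le' hp
  exact M.spq_succ_nonneg (M.add_one_le_lIdx_iff.mp hpl).1

lemma spq_succ_le_maxSpq {δ : ℝ} (h : p + 1 ≤ lIdx M.c δ q) :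
    spq M.n M.c (p + 1) q ≤ maxSpq M.n M.c δ q := by
  refine le_csSup ⟨1, ?_⟩ ⟨p + 1, le_add_self, h, rfl⟩
  rintro _ ⟨p, hp, hpl, rfl⟩
  obtain ⟨p, rfl⟩ := Nat.exists_eq_add_of_le' hp
  exact M.spq_succ_le_one (M.add_one_le_lIdx_iff.mp hpl).1

lemma isBoundedUnder_maxSpq (δ : ℝ) : IsBoundedUnder (· ≤ ·) atTop (maxSpq M.n M.c δ) :=
  isBoundedUnder_of ⟨1, M.maxSpq_le_one δ⟩

lemma isCoboundedUnder_maxSpq (δ : ℝ) : IsCoboundedUnder (· ≤ ·) atTop (maxSpq M.n M.c δ) :=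
  (isBoundedUnder_of ⟨0, M.maxSpq_nonneg δ⟩).isCoboundedUnder_le

lemma limsupMaxSpq_nonneg (δ : ℝ) : 0 ≤ limsupMaxSpq M.n M.c δ :=
  le_limsup_of_frequently_le (Frequently.of_forall (M.maxSpq_nonneg δ)) (M.isBoundedUnder_maxSpq δ)

lemma limsupMaxSpq_le_one (δ : ℝ) : limsupMaxSpq M.n M.c δ ≤ 1 :=
  limsup_le_of_le (M.isCoboundedUnder_maxSpq δ) (Eventually.of_forall (M.maxSpq_le_one δ))

lemma bddAbove_limsupMaxSpq_image (s : Set ℝ) : BddAbove (limsupMaxSpq M.n M.c '' s) :=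
  ⟨1, by rintro _ ⟨δ, -, rfl⟩; exact M.limsupMaxSpq_le_one δ⟩

lemma antitone_limsupMaxSpq : Antitone (limsupMaxSpq M.n M.c) := fun δ₁ δ₂ hδ => by
  refine limsup_le_limsup (Eventually.of_forall fun q => ?_) (M.isCoboundedUnder_maxSpq δ₂)
    (M.isBoundedUnder_maxSpq δ₁)
  refine M.maxSpq_le (M.maxSpq_nonneg δ₁ q) fun p hp => M.spq_succ_le_maxSpq ?_
  obtain ⟨hpq, hδ₂⟩ := M.add_one_le_lIdx_iff.mp hp
  have := mul_le_mul_of_nonneg_right hδ (M.logScale_nonneg q)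
  exact M.add_one_le_lIdx_iff.mpr ⟨hpq, by linarith⟩

lemma eventually_logScale_succ_sub_le
    (hlim : Tendsto (fun k => Real.log (M.c k) / Real.log (∏ i ∈ Finset.Icc 1 k, M.c i))
      atTop (𝓝 0)) {ε : ℝ} (hε : 0 < ε) :
    ∀ᶠ q in atTop, ∀ k < q, M.logScale (k + 1) - M.logScale k ≤ ε * M.logScale q := by
  obtain ⟨K, hK⟩ := eventually_atTop.mp (hlim.eventually (gt_mem_nhds hε))
  filter_upwards [M.tendsto_logScale_atTop.eventually_ge_atTop (M.logScale K / ε)] with q hq k hkq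
  rw [div_le_iff₀ hε] at hq
  have hmono := M.logScale_strictMono.monotone
  rcases le_or_gt K (k + 1) with hKk | hKk
  · have h := hK (k + 1) hKk
    have hc : Real.log (M.c (k + 1)) = -(M.logScale (k + 1) - M.logScale k) := by
      rw [M.logScale_succ_sub, neg_neg]
    have hprod : Real.log (∏ i ∈ Finset.Icc 1 (k + 1), M.c i) = -M.logScale (k + 1) :=
      (neg_neg _).symm
    rw [hc, hprod, neg_div_neg_eq, div_lt_iff₀ (M.logScale_pos k.succ_pos)] at h
    nlinarith [hmono (show k + 1 ≤ q by omega)]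
  · nlinarith [hmono (show k + 1 ≤ K by omega), M.logScale_nonneg k]

end MoranParams

structure MoranConstruction extends MoranParams where
  a : List ℕ → ℝ
  b : List ℕ → ℝ
  a_lt_b_nil : a [] < b []
  child_subset : ∀ w, MoranAdmissible n w → ∀ j, 1 ≤ j → j ≤ n (w.length + 1) →
    a w ≤ a (w ++ [j]) ∧ b (w ++ [j]) ≤ b w
  child_length : ∀ w, MoranAdmissible n w → ∀ j, 1 ≤ j → j ≤ n (w.length + 1) →
    b (w ++ [j]) - a (w ++ [j]) = c (w.length + 1) * (b w - a w)
  child_disjoint : ∀ w, MoranAdmissible n w → ∀ j j', 1 ≤ j → j ≤ n (w.length + 1) →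
    1 ≤ j' → j' ≤ n (w.length + 1) → j ≠ j' →
    interior (Icc (a (w ++ [j])) (b (w ++ [j]))) ∩
      interior (Icc (a (w ++ [j'])) (b (w ++ [j']))) = ∅

namespace MoranConstruction

variable (M : MoranConstruction) {p q : ℕ} {u w w' : List ℕ}

def limitSet : Set ℝ :=
  ⋂ k : ℕ, ⋃ w ∈ {w : List ℕ | MoranAdmissible M.n w ∧ w.length = k}, Icc (M.a w) (M.b w)

noncomputable def basicLength (k : ℕ) : ℝ := (M.b [] - M.a []) * Real.exp (-M.logScale k)

lemma basicLength_pos (k : ℕ) : 0 < M.basicLength k :=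
  mul_pos (sub_pos.mpr M.a_lt_b_nil) (Real.exp_pos _)

lemma log_basicLength (k : ℕ) :
    Real.log (M.basicLength k) = Real.log (M.b [] - M.a []) - M.logScale k := by
  rw [basicLength, Real.log_mul (sub_pos.mpr M.a_lt_b_nil).ne' (Real.exp_pos _).ne', Real.log_exp]
  ring

lemma basicLength_strictAnti : StrictAnti M.basicLength := fun _ _ hk =>
  mul_lt_mul_of_pos_left (Real.exp_lt_exp.mpr (neg_lt_neg (M.logScale_strictMono hk)))
    (sub_pos.mpr M.a_lt_b_nil)

lemma tendsto_basicLength_atTop : Tendsto M.basicLength atTop (𝓝 0) := by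
  rw [← mul_zero (M.b [] - M.a [])]
  exact (Real.tendsto_exp_neg_atTop_nhds_zero.comp M.tendsto_logScale_atTop).const_mul _

lemma basicLength_succ (k : ℕ) : M.basicLength (k + 1) = M.c (k + 1) * M.basicLength k := by
  have h := M.logScale_succ_sub k
  rw [basicLength, basicLength, show -M.logScale (k + 1) = -M.logScale k + Real.log (M.c (k + 1)) by
    linarith, Real.exp_add, Real.exp_log (M.c_pos _ k.succ_pos)]
  ring

lemma sub_eq_basicLength (hw : MoranAdmissible M.n w) : M.b w - M.a w = M.basicLength w.length := by
  induction w using List.reverseRecOn with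
  | nil => simp [basicLength, MoranParams.logScale_zero]
  | append_singleton w j ih =>
    obtain ⟨hw, hj⟩ := moranAdmissible_concat.mp hw
    rw [M.child_length w hw j hj.1 hj.2, ih hw, List.length_append, List.length_singleton,
      basicLength_succ]

lemma a_lt_b (hw : MoranAdmissible M.n w) : M.a w < M.b w :=
  sub_pos.mp (M.sub_eq_basicLength hw ▸ M.basicLength_pos _)

lemma Icc_subset_of_prefix (hw : MoranAdmissible M.n w) (huw : u <+: w) :
    Icc (M.a w) (M.b w) ⊆ Icc (M.a u) (M.b u) := by
  induction w using List.reverseRecOn with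
  | nil => rw [List.prefix_nil.mp huw]
  | append_singleton w j ih =>
    obtain ⟨hw, hj⟩ := moranAdmissible_concat.mp hw
    obtain rfl | huw := List.prefix_concat_iff.mp huw
    · exact subset_rfl
    obtain ⟨ha, hb⟩ := M.child_subset w hw j hj.1 hj.2
    exact (Icc_subset_Icc ha hb).trans (ih hw huw)

lemma b_le_a_or_b_le_a (hw : MoranAdmissible M.n w) (hw' : MoranAdmissible M.n w')
    (hlen : w.length = w'.length) (hne : w ≠ w') : M.b w ≤ M.a w' ∨ M.b w' ≤ M.a w := by
  induction w using List.reverseRecOn generalizing w' with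
  | nil => exact absurd (List.length_eq_zero_iff.mp hlen.symm).symm hne
  | append_singleton u j ih =>
    obtain rfl | ⟨u', j', rfl⟩ := List.eq_nil_or_concat' w'
    · simp at hlen
    obtain ⟨hu, hj⟩ := moranAdmissible_concat.mp hw
    obtain ⟨hu', hj'⟩ := moranAdmissible_concat.mp hw'
    simp only [List.length_append, List.length_singleton, add_left_inj] at hlen
    by_cases huu' : u = u'
    · subst huu'
      have hjj' : j ≠ j' := fun h => hne (h ▸ rfl)
      exact le_or_le_of_interior_Icc_inter_eq_empty (M.a_lt_b hw) (M.a_lt_b hw')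
        (M.child_disjoint u hu j j' hj.1 hj.2 hj'.1 hj'.2 hjj')
    · have hsub := M.child_subset u hu j hj.1 hj.2
      have hsub' := M.child_subset u' hu' j' hj'.1 hj'.2
      rcases ih hu hu' hlen huu' with h | h
      · exact Or.inl (by linarith)
      · exact Or.inr (by linarith)

lemma basicLength_le_abs_sub (hw : MoranAdmissible M.n w) (hw' : MoranAdmissible M.n w')
    (hlen : w.length = w'.length) (hne : w ≠ w') : M.basicLength w.length ≤ |M.a w - M.a w'| := by
  have h := M.sub_eq_basicLength hw
  have h' := M.sub_eq_basicLength hw'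
  rw [le_abs]
  rcases M.b_le_a_or_b_le_a hw hw' hlen hne with h'' | h''
  · right; linarith
  · left; rw [hlen] at h ⊢; linarith

lemma mem_limitSet {x : ℝ} : x ∈ M.limitSet ↔
    ∀ k, ∃ w, MoranAdmissible M.n w ∧ w.length = k ∧ x ∈ Icc (M.a w) (M.b w) := by
  simp only [limitSet, mem_iInter, mem_iUnion, mem_ofPred_eq, exists_prop, and_assoc]

lemma exists_mem_limitSet (hw : MoranAdmissible M.n w) :
    ∃ x ∈ M.limitSet, x ∈ Icc (M.a w) (M.b w) := by
  let v : ℕ → List ℕ := fun m => w ++ List.replicate m 1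
  have hv : ∀ m, MoranAdmissible M.n (v m) := M.moranAdmissible_append_replicate hw
  have hprefix : ∀ {m m'}, m ≤ m' → v m <+: v m' := fun {m m'} h =>
    (List.prefix_append_right_inj w).mpr ⟨List.replicate (m' - m) 1, by
      rw [← List.replicate_add, Nat.add_sub_cancel' h]⟩
  obtain ⟨x, hx⟩ := IsCompact.nonempty_iInter_of_sequence_nonempty_isCompact_isClosed
    (fun m => Icc (M.a (v m)) (M.b (v m)))
    (fun m => M.Icc_subset_of_prefix (hv (m + 1)) (hprefix m.le_succ))
    (fun m => nonempty_Icc.mpr (M.a_lt_b (hv m)).le) isCompact_Icc (fun _ => isClosed_Icc)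
  rw [mem_iInter] at hx
  refine ⟨x, M.mem_limitSet.mpr fun k => ?_, by simpa [v] using hx 0⟩
  refine ⟨(v k).take k, (hv k).of_prefix (List.take_prefix _ _), by simp [v], ?_⟩
  exact M.Icc_subset_of_prefix (hv k) (List.take_prefix _ _) (hx k)

lemma card_le_four_of_near {S : Finset (List ℕ)}
    (hS : ∀ u ∈ S, MoranAdmissible M.n u ∧ u.length = p) {x R : ℝ} (hR : R ≤ M.basicLength p)
    (hnear : ∀ u ∈ S, ∃ y ∈ Icc (M.a u) (M.b u), |y - x| ≤ R) : S.card ≤ 4 := by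
  refine card_le_of_separated S M.a (M.basicLength_pos p) (fun u hu u' hu' hne => ?_)
    (u := x - R - M.basicLength p) (k := 3) fun u hu => ?_
  · obtain ⟨hu, rfl⟩ := hS u hu
    exact M.basicLength_le_abs_sub hu (hS u' hu').1 (hS u' hu').2.symm hne
  · obtain ⟨y, ⟨hay, hyb⟩, hyx⟩ := hnear u hu
    have hlen := M.sub_eq_basicLength (hS u hu).1
    rw [(hS u hu).2] at hlen
    rw [abs_le] at hyx
    constructor <;> push_cast <;> linarith

lemma card_le_four_mul_prod_of_near {T : Finset (List ℕ)}
    (hT : ∀ w ∈ T, MoranAdmissible M.n w ∧ w.length = q) {x R : ℝ} (hpq : p ≤ q)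
    (hR : R ≤ M.basicLength p) (hnear : ∀ w ∈ T, ∃ y ∈ Icc (M.a w) (M.b w), |y - x| ≤ R) :
    T.card ≤ 4 * ∏ i ∈ Finset.Ioc p q, M.n i := by
  classical
  have hprefix : ∀ v ∈ T, MoranAdmissible M.n (v.take p) ∧ (v.take p).length = p := fun v hv =>
    ⟨(hT v hv).1.of_prefix (List.take_prefix _ _), by simp [(hT v hv).2, hpq]⟩
  have hfiber : ∀ u ∈ T.image (List.take p),
      (T.filter (List.take p · = u)).card ≤ ∏ i ∈ Finset.Ioc p q, M.n i := by
    intro u hu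
    obtain ⟨v, hv, rfl⟩ := Finset.mem_image.mp hu
    calc _ ≤ (moranDescendants M.n (v.take p) (q - p)).card := Finset.card_le_card fun w hw => by
          obtain ⟨hwT, hwp⟩ := Finset.mem_filter.mp hw
          rw [mem_moranDescendants (hprefix v hv).1, ← hwp, (hprefix w hwT).2, (hT w hwT).2]
          exact ⟨(hT w hwT).1, List.take_prefix _ _, by omega⟩
      _ = ∏ i ∈ Finset.Ioc p q, M.n i := by
          rw [card_moranDescendants, (hprefix v hv).2, Nat.add_sub_cancel' hpq]
  have himage : (T.image (List.take p)).card ≤ 4 := by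
    refine M.card_le_four_of_near (fun u hu => ?_) (x := x) hR fun u hu => ?_
    all_goals obtain ⟨v, hv, rfl⟩ := Finset.mem_image.mp hu
    · exact hprefix v hv
    · obtain ⟨y, hyv, hyx⟩ := hnear v hv
      exact ⟨y, M.Icc_subset_of_prefix (hT v hv).1 (List.take_prefix _ _) hyv, hyx⟩
  calc T.card ≤ (∏ i ∈ Finset.Ioc p q, M.n i) * (T.image (List.take p)).card :=
        Finset.card_le_mul_card_image T _ hfiber
    _ ≤ 4 * ∏ i ∈ Finset.Ioc p q, M.n i := by rw [mul_comm]; exact Nat.mul_le_mul_right _ himage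

lemma exists_cover_of_words {r : ℝ} (hr : M.basicLength q ≤ r) (x : M.limitSet) (R : ℝ)
    (T : Finset (List ℕ)) (hT : ∀ w ∈ T, MoranAdmissible M.n w ∧ w.length = q)
    (hcover : ∀ y ∈ M.limitSet, |y - x| ≤ R → ∃ w ∈ T, y ∈ Icc (M.a w) (M.b w)) :
    ∃ s : Finset M.limitSet, s.card ≤ T.card ∧ closedBall x R ⊆ ⋃ z ∈ s, closedBall z r := by
  have hpoint : ∀ w ∈ T, ∃ z : M.limitSet, (z : ℝ) ∈ Icc (M.a w) (M.b w) := fun w hw =>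
    let ⟨z, hzE, hz⟩ := M.exists_mem_limitSet (hT w hw).1
    ⟨⟨z, hzE⟩, hz⟩
  have : Nonempty M.limitSet := ⟨x⟩
  choose! z hz using hpoint
  refine ⟨T.image z, Finset.card_image_le, fun y hy => ?_⟩
  rw [mem_closedBall, Subtype.dist_eq, Real.dist_eq] at hy
  obtain ⟨w, hwT, hyw⟩ := hcover y y.2 hy
  refine mem_biUnion (Finset.mem_image_of_mem z hwT) ?_
  rw [mem_closedBall, Subtype.dist_eq]
  have := Real.dist_le_of_mem_Icc hyw (hz w hwT)
  rw [M.sub_eq_basicLength (hT w hwT).1, (hT w hwT).2] at this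
  exact this.trans hr

lemma coverNum_limitSet_le {r R : ℝ} (hpq : p ≤ q) (hr : M.basicLength q ≤ r)
    (hR : R ≤ M.basicLength p) : coverNum M.limitSet r R ≤ 4 * ∏ i ∈ Finset.Ioc p q, M.n i := by
  classical
  refine coverNum_le fun x => ?_
  let T := (moranDescendants M.n [] q).filter fun w => ∃ y ∈ Icc (M.a w) (M.b w), |y - x| ≤ R
  have hT : ∀ w ∈ T, MoranAdmissible M.n w ∧ w.length = q := fun w hw =>
    mem_moranDescendants_nil.mp (Finset.mem_filter.mp hw).1
  obtain ⟨s, hs, hcover⟩ := M.exists_cover_of_words hr x R T hT fun y hy hyx => by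
    obtain ⟨w, hw, hwq, hyw⟩ := M.mem_limitSet.mp hy q
    exact ⟨w, Finset.mem_filter.mpr ⟨mem_moranDescendants_nil.mpr ⟨hw, hwq⟩, y, hyw, hyx⟩, hyw⟩
  exact ⟨s, hs.trans (M.card_le_four_mul_prod_of_near hT hpq hR fun w hw =>
    (Finset.mem_filter.mp hw).2), hcover⟩

lemma prod_le_four_mul_coverNum {R : ℝ} (hpq : p ≤ q) (hR : M.basicLength p ≤ R) :
    ∏ i ∈ Finset.Ioc p q, M.n i ≤ 4 * coverNum M.limitSet (M.basicLength q) R := by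
  classical
  let w := List.replicate p 1
  have hw : MoranAdmissible M.n w := by
    simpa using M.moranAdmissible_append_replicate (moranAdmissible_nil M.n) p
  obtain ⟨x, hxE, hxw⟩ := M.exists_mem_limitSet hw
  let D := moranDescendants M.n w (q - p)
  have hD : ∀ v ∈ D, (MoranAdmissible M.n v ∧ v.length = q) ∧
      Icc (M.a v) (M.b v) ⊆ Icc (M.a w) (M.b w) := fun v hv => by
    obtain ⟨hv, hwv, hlen⟩ := (mem_moranDescendants hw).mp hv
    exact ⟨⟨hv, by simp [w] at hlen; omega⟩, M.Icc_subset_of_prefix hv hwv⟩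
  have hcard : D.card = ∏ i ∈ Finset.Ioc p q, M.n i := by
    rw [card_moranDescendants, List.length_replicate, Nat.add_sub_cancel' hpq]
  rw [← hcard]
  refine le_mul_coverNum ⟨x, hxE⟩ (fun x' => M.exists_cover_of_words le_rfl x' R _
    (fun _ => mem_moranDescendants_nil.mp) fun y hy _ => ?_) fun s hs => ?_
  · obtain ⟨v, hv, hvq, hyv⟩ := M.mem_limitSet.mp hy q
    exact ⟨v, mem_moranDescendants_nil.mpr ⟨hv, hvq⟩, hyv⟩
  have hnear : ∀ v ∈ D, ∃ z ∈ s, ∃ y ∈ Icc (M.a v) (M.b v), |y - z| ≤ M.basicLength q := by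
    intro v hv
    obtain ⟨y, hyE, hyv⟩ := M.exists_mem_limitSet (hD v hv).1.1
    have hy : (⟨y, hyE⟩ : M.limitSet) ∈ closedBall ⟨x, hxE⟩ R := by
      rw [mem_closedBall, Subtype.dist_eq]
      refine (Real.dist_le_of_mem_Icc ((hD v hv).2 hyv) hxw).trans ?_
      rwa [M.sub_eq_basicLength hw, List.length_replicate]
    obtain ⟨z, hz, hyz⟩ := mem_iUnion₂.mp (hs hy)
    exact ⟨z, hz, y, hyv, by rwa [mem_closedBall, Subtype.dist_eq, Real.dist_eq] at hyz⟩
  have : Nonempty M.limitSet := ⟨⟨x, hxE⟩⟩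
  choose! g hg using hnear
  calc D.card ≤ 4 * (D.image g).card := by
        refine Finset.card_le_mul_card_image D 4 fun z _ => M.card_le_four_of_near
          (fun v hv => (hD v (Finset.mem_filter.mp hv).1).1) (x := z) le_rfl fun v hv => ?_
        obtain ⟨hvD, rfl⟩ := Finset.mem_filter.mp hv
        exact (hg v hvD).2
    _ ≤ 4 * s.card :=
        Nat.mul_le_mul_left 4
          (Finset.card_le_card (Finset.image_subset_iff.mpr fun v hv => (hg v hv).1))

lemma log_basicLength_div (k m : ℕ) :
    Real.log (M.basicLength m / M.basicLength k) = M.logScale k - M.logScale m := by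
  rw [Real.log_div (M.basicLength_pos m).ne' (M.basicLength_pos k).ne', M.log_basicLength,
    M.log_basicLength]
  ring

variable {r R : ℝ}

lemma exists_levels_between (hr : 0 < r) (hrR : r < R) (hR : R ≤ M.basicLength 0) :
    ∃ p k, p < k + 1 ∧ M.basicLength (p + 1) < R ∧ R ≤ M.basicLength p ∧
      M.basicLength (k + 1) < r ∧ r ≤ M.basicLength k := by
  obtain ⟨p, hpR, hRp⟩ := exists_lt_le_of_tendsto_zero M.tendsto_basicLength_atTop (hr.trans hrR) hR
  obtain ⟨k, hkr, hrk⟩ := exists_lt_le_of_tendsto_zero M.tendsto_basicLength_atTop hr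
    (hrR.le.trans hR)
  exact ⟨p, k, M.basicLength_strictAnti.lt_iff_gt.mp (hkr.trans (hrR.trans_le hRp)), hpR, hRp,
    hkr, hrk⟩

lemma logScale_sub_le_of_scales {k : ℕ} {δ ε : ℝ} (hδ : 0 < δ) (hε : ε ≤ 1 / 2)
    (hinc : ∀ j < k + 1, M.logScale (j + 1) - M.logScale j ≤ ε * M.logScale (k + 1))
    (hL : 6 * Real.log (M.b [] - M.a []) ≤ M.logScale (k + 1)) (hpk : p < k + 1) (hr : 0 < r)
    (hpR : M.basicLength (p + 1) < R) (hrk : r ≤ M.basicLength k) (hrR : r ^ (1 - δ) ≤ R) :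
    δ * (M.logScale (k + 1) - M.logScale p) ≤ (δ + 6 * ε) * Real.log (R / r) := by
  have hR : 0 < R := (M.basicLength_pos _).trans hpR
  have hlogR : Real.log (M.b [] - M.a []) - M.logScale (p + 1) < Real.log R :=
    M.log_basicLength (p + 1) ▸ Real.log_lt_log (M.basicLength_pos _) hpR
  have hlogr : Real.log r ≤ Real.log (M.b [] - M.a []) - M.logScale k :=
    M.log_basicLength k ▸ Real.log_le_log hr hrk
  have hlogrR : (1 - δ) * Real.log r ≤ Real.log R := by
    rw [← Real.log_rpow hr]
    exact Real.log_le_log (Real.rpow_pos_of_pos hr _) hrR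
  rw [Real.log_div hR.ne' hr.ne']
  have hincq := hinc k (lt_add_one k)
  have hincp := hinc p hpk
  have hq : M.logScale (k + 1) / 3 ≤ M.logScale k - Real.log (M.b [] - M.a []) := by
    nlinarith [M.logScale_nonneg (k + 1)]
  have hWq : δ * M.logScale (k + 1) ≤ 3 * (Real.log R - Real.log r) := by nlinarith
  have hε0 : 0 ≤ ε := by nlinarith [M.logScale_strictMono (lt_add_one k), M.logScale_nonneg (k + 1)]
  have hwin : M.logScale (k + 1) - M.logScale p ≤
      (Real.log R - Real.log r) + 2 * ε * M.logScale (k + 1) := by linarith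
  nlinarith [mul_le_mul_of_nonneg_left hWq (by positivity : 0 ≤ 2 * ε),
    mul_le_mul_of_nonneg_left hwin hδ.le]

lemma add_one_le_lIdx_of_scales {δ δ' : ℝ} (hδ : δ < 1)
    (hL : δ * Real.log (M.b [] - M.a []) < (δ - δ') * M.logScale q) (hpq : p < q) (hr : 0 < r)
    (hqr : M.basicLength q < r) (hRp : R ≤ M.basicLength p) (hrR : r ^ (1 - δ) ≤ R) :
    p + 1 ≤ lIdx M.c δ' q := by
  have hR : 0 < R := (Real.rpow_pos_of_pos hr _).trans_le hrR
  have hlogR : Real.log R ≤ Real.log (M.b [] - M.a []) - M.logScale p :=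
    M.log_basicLength p ▸ Real.log_le_log hR hRp
  have hlogr : Real.log (M.b [] - M.a []) - M.logScale q < Real.log r :=
    M.log_basicLength q ▸ Real.log_lt_log (M.basicLength_pos _) hqr
  have hlogrR : (1 - δ) * Real.log r ≤ Real.log R := by
    rw [← Real.log_rpow hr]
    exact Real.log_le_log (Real.rpow_pos_of_pos hr _) hrR
  refine M.add_one_le_lIdx_iff.mpr ⟨hpq, ?_⟩
  nlinarith

lemma hasQuasiAssouadBound_of_limsupMaxSpq_lt
    (hlim : Tendsto (fun k => Real.log (M.c k) / Real.log (∏ i ∈ Finset.Icc 1 k, M.c i))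
      atTop (𝓝 0))
    {δ' δ α : ℝ} (hδ' : 0 < δ') (hδ'δ : δ' < δ) (hδ : δ < 1)
    (hα : limsupMaxSpq M.n M.c δ' < α) : HasQuasiAssouadBound M.limitSet δ α := by
  set L := Real.log (M.b [] - M.a [])
  have hδ0 : 0 < δ := hδ'.trans hδ'δ
  obtain ⟨α₀, hα₀, hα₀α⟩ := exists_between hα
  have hα₀0 : 0 ≤ α₀ := (M.limsupMaxSpq_nonneg δ').trans hα₀.le
  set ε := min (1 / 2) (δ * (α - α₀) / (6 * (α₀ + 1)))
  have hε0 : 0 < ε := lt_min (by norm_num) (div_pos (mul_pos hδ0 (by linarith)) (by positivity))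
  have hεα : 6 * ε * α₀ ≤ δ * (α - α₀) := by
    have := (le_div_iff₀ (by positivity)).mp (min_le_right (1 / 2) (δ * (α - α₀) / (6 * (α₀ + 1))))
    nlinarith
  obtain ⟨Q, hQ⟩ := eventually_atTop.mp <|
    (eventually_lt_of_limsup_lt hα₀ (M.isBoundedUnder_maxSpq δ')).and <|
    (M.eventually_logScale_succ_sub_le hlim hε0).and <|
    (M.tendsto_logScale_atTop.eventually_ge_atTop (6 * L)).and
    (M.tendsto_logScale_atTop.eventually_gt_atTop (δ * L / (δ - δ')))
  refine ⟨M.basicLength Q, 4, M.basicLength_pos Q, four_pos, fun r R hr hrr hrR hRb => ?_⟩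
  have hrR' : r < R := hrr.trans_le hrR
  obtain ⟨p, k, hpq, hpR, hRp, hkr, hrk⟩ := M.exists_levels_between hr hrR'
    (hRb.le.trans (M.basicLength_strictAnti.antitone Q.zero_le))
  have hQq : Q < k + 1 := M.basicLength_strictAnti.lt_iff_gt.mp (hkr.trans (hrR'.trans hRb))
  obtain ⟨hmax, hinc, hL6, hLδ⟩ := hQ (k + 1) hQq.le
  rw [div_lt_iff₀' (sub_pos.mpr hδ'δ)] at hLδ
  have hspq := (M.spq_succ_le_maxSpq
    (M.add_one_le_lIdx_of_scales hδ hLδ hpq hr hkr hRp hrR)).trans_lt hmax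
  have hwindow := M.logScale_sub_le_of_scales hδ0 (min_le_left _ _) hinc hL6 hpq hr hpR hrk hrR
  have hgap : 0 < M.logScale (k + 1) - M.logScale p := sub_pos.mpr (M.logScale_strictMono hpq)
  rw [M.spq_succ hpq.le, div_lt_iff₀ hgap] at hspq
  have hW : 0 ≤ Real.log (R / r) := Real.log_nonneg ((one_le_div hr).mpr hrR'.le)
  have hlog : Real.log (∏ i ∈ Finset.Ioc p (k + 1), (M.n i : ℝ)) ≤ α * Real.log (R / r) := by
    refine le_of_mul_le_mul_left ?_ hδ0
    nlinarith [mul_le_mul_of_nonneg_left hwindow hα₀0]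
  calc (coverNum M.limitSet r R : ℝ) ≤ 4 * ∏ i ∈ Finset.Ioc p (k + 1), (M.n i : ℝ) := by
        exact_mod_cast M.coverNum_limitSet_le hpq.le hkr.le hRp
    _ ≤ 4 * (R / r) ^ α := by
        gcongr
        rw [Real.le_rpow_iff_log_le (M.prod_n_pos _ _) (div_pos (hr.trans hrR') hr)]
        exact hlog

lemma rpow_basicLength_le_iff {δ : ℝ} (m q : ℕ) :
    M.basicLength q ^ (1 - δ) ≤ M.basicLength m ↔
      M.logScale m ≤ (1 - δ) * M.logScale q + δ * Real.log (M.b [] - M.a []) := by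
  rw [← Real.log_le_log_iff (Real.rpow_pos_of_pos (M.basicLength_pos q) _) (M.basicLength_pos m),
    Real.log_rpow (M.basicLength_pos q), M.log_basicLength, M.log_basicLength]
  constructor <;> intro h <;> linarith

lemma log_prod_n_le_of_coverNum_le {m : ℕ} {C α : ℝ} (hmq : m ≤ q) (hC : 0 < C)
    (hcover : (coverNum M.limitSet (M.basicLength q) (M.basicLength m) : ℝ) ≤
      C * (M.basicLength m / M.basicLength q) ^ α) :
    Real.log (∏ i ∈ Finset.Ioc m q, (M.n i : ℝ)) ≤
      Real.log (4 * C) + α * (M.logScale q - M.logScale m) := by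
  have hdiv := div_pos (M.basicLength_pos m) (M.basicLength_pos q)
  have hprod : ∏ i ∈ Finset.Ioc m q, (M.n i : ℝ) ≤
      4 * C * (M.basicLength m / M.basicLength q) ^ α := by
    have := M.prod_le_four_mul_coverNum hmq le_rfl
    calc ∏ i ∈ Finset.Ioc m q, (M.n i : ℝ)
        ≤ 4 * (coverNum M.limitSet (M.basicLength q) (M.basicLength m) : ℝ) := by
          exact_mod_cast this
      _ ≤ 4 * C * (M.basicLength m / M.basicLength q) ^ α := by linarith
  calc _ ≤ Real.log (4 * C * (M.basicLength m / M.basicLength q) ^ α) :=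
        Real.log_le_log (M.prod_n_pos _ _) hprod
    _ = _ := by
        rw [Real.log_mul (by positivity) (Real.rpow_pos_of_pos hdiv _).ne', Real.log_rpow hdiv,
          M.log_basicLength_div]

lemma exists_log_prod_n_le_of_hasQuasiAssouadBound {δ α : ℝ} (hδ : 0 < δ) (hα : 0 ≤ α)
    (h : HasQuasiAssouadBound M.limitSet (δ / 2) α) :
    ∃ K, 0 ≤ K ∧ ∀ᶠ q in atTop, ∀ p < q, δ * M.logScale q < M.logScale q - M.logScale p →
      Real.log (∏ i ∈ Finset.Ioc p q, (M.n i : ℝ)) ≤ K + α * (M.logScale q - M.logScale p) := by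
  obtain ⟨b, C, hb, hC, hbound⟩ := h
  obtain ⟨P, hP⟩ := (M.tendsto_basicLength_atTop.eventually (gt_mem_nhds hb)).exists
  refine ⟨M.logScale P + |Real.log (4 * C)|, add_nonneg (M.logScale_nonneg P) (abs_nonneg _), ?_⟩
  filter_upwards [eventually_ge_atTop P,
    M.tendsto_basicLength_atTop.eventually (gt_mem_nhds one_pos),
    M.tendsto_logScale_atTop.eventually_ge_atTop
      ((2 * M.logScale P - δ * Real.log (M.b [] - M.a [])) / δ)]
    with q hPq hq1 hqP p hpq hδpq
  rw [div_le_iff₀ hδ] at hqP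
  have hmq : max p P ≤ q := max_le hpq.le hPq
  have hmono := M.logScale_strictMono.monotone
  have hγm : M.logScale (max p P) ≤ M.logScale p + M.logScale P := by
    rw [hmono.map_max]
    exact max_le (by linarith [M.logScale_nonneg P]) (by linarith [M.logScale_nonneg p])
  have hγpm := hmono (le_max_left p P)
  have hr := M.basicLength_pos q
  have hrr : M.basicLength q < M.basicLength q ^ (1 - δ / 2) := by
    simpa using Real.rpow_lt_rpow_of_exponent_gt hr hq1 (by linarith : 1 - δ / 2 < 1)
  have hrR := (M.rpow_basicLength_le_iff (δ := δ / 2) (max p P) q).mpr (by nlinarith)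
  have hRb := (M.basicLength_strictAnti.antitone (le_max_right p P)).trans_lt hP
  have hlog := M.log_prod_n_le_of_coverNum_le hmq hC (hbound _ _ hr hrr hrR hRb)
  rw [M.log_prod_n_add (le_max_left p P) hmq]
  nlinarith [M.log_prod_n_le (le_max_left p P), le_abs_self (Real.log (4 * C)),
    mul_le_mul_of_nonneg_left hγpm hα]

lemma limsupMaxSpq_le_of_hasQuasiAssouadBound {δ α : ℝ} (hδ : 0 < δ) (hα : 0 ≤ α)
    (h : HasQuasiAssouadBound M.limitSet (δ / 2) α) : limsupMaxSpq M.n M.c δ ≤ α := by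
  obtain ⟨K, hK0, hK⟩ := M.exists_log_prod_n_le_of_hasQuasiAssouadBound hδ hα h
  refine le_of_forall_pos_le_add fun ε hε => limsup_le_of_le (M.isCoboundedUnder_maxSpq δ) ?_
  filter_upwards [hK, M.tendsto_logScale_atTop.eventually_ge_atTop (K / (δ * ε))] with q hq hqK
  refine M.maxSpq_le (by positivity) fun p hp => ?_
  obtain ⟨hpq, hδpq⟩ := M.add_one_le_lIdx_iff.mp hp
  have hgap : 0 < M.logScale q - M.logScale p := sub_pos.mpr (M.logScale_strictMono hpq)
  rw [M.spq_succ hpq.le, div_le_iff₀ hgap]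
  rw [div_le_iff₀ (by positivity)] at hqK
  nlinarith [hq p hpq hδpq, mul_lt_mul_of_pos_left hδpq hε]

lemma hFun_le_limsupMaxSpq
    (hlim : Tendsto (fun k => Real.log (M.c k) / Real.log (∏ i ∈ Finset.Icc 1 k, M.c i))
      atTop (𝓝 0))
    {δ' δ : ℝ} (hδ' : 0 < δ') (hδ'δ : δ' < δ) (hδ : δ < 1) :
    hFun M.limitSet δ ≤ limsupMaxSpq M.n M.c δ' :=
  le_of_forall_gt_imp_ge_of_dense fun _ hα => csInf_le ⟨0, fun _ h => h.1⟩
    ⟨(M.limsupMaxSpq_nonneg δ').trans hα.le,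
      M.hasQuasiAssouadBound_of_limsupMaxSpq_lt hlim hδ' hδ'δ hδ hα⟩

lemma limsupMaxSpq_le_hFun
    (hlim : Tendsto (fun k => Real.log (M.c k) / Real.log (∏ i ∈ Finset.Icc 1 k, M.c i))
      atTop (𝓝 0))
    {δ : ℝ} (hδ : 0 < δ) (hδ1 : δ < 1) : limsupMaxSpq M.n M.c δ ≤ hFun M.limitSet (δ / 2) := by
  rw [hFun_eq]
  refine le_csInf ⟨limsupMaxSpq M.n M.c (δ / 4) + 1, ?_, ?_⟩ fun α ⟨hα, h⟩ =>
    M.limsupMaxSpq_le_of_hasQuasiAssouadBound hδ hα h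
  · linarith [M.limsupMaxSpq_nonneg (δ / 4)]
  · exact M.hasQuasiAssouadBound_of_limsupMaxSpq_lt hlim (by linarith) (by linarith) (by linarith)
      (lt_add_one _)

theorem dimqA_limitSet
    (hlim : Tendsto (fun k => Real.log (M.c k) / Real.log (∏ i ∈ Finset.Icc 1 k, M.c i))
      atTop (𝓝 0)) :
    dimqA M.limitSet = sSup (limsupMaxSpq M.n M.c '' Ioo 0 1) := by
  have hle : ∀ δ ∈ Ioo (0 : ℝ) 1, hFun M.limitSet δ ≤ limsupMaxSpq M.n M.c (δ / 2) := fun δ hδ =>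
    M.hFun_le_limsupMaxSpq hlim (by linarith [hδ.1]) (by linarith [hδ.1]) hδ.2
  refine le_antisymm (csSup_image_Ioo_le_of_le_half (M.bddAbove_limsupMaxSpq_image _) hle)
    (csSup_image_Ioo_le_of_le_half ⟨1, ?_⟩ fun δ hδ => M.limsupMaxSpq_le_hFun hlim hδ.1 hδ.2)
  rintro _ ⟨δ, hδ, rfl⟩
  exact (hle δ hδ).trans (M.limsupMaxSpq_le_one _)

theorem tendsto_limsupMaxSpq_dimqA
    (hlim : Tendsto (fun k => Real.log (M.c k) / Real.log (∏ i ∈ Finset.Icc 1 k, M.c i))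
      atTop (𝓝 0)) :
    Tendsto (limsupMaxSpq M.n M.c) (𝓝[>] 0) (𝓝 (dimqA M.limitSet)) := by
  rw [M.dimqA_limitSet hlim]
  exact (M.antitone_limsupMaxSpq.antitoneOn _).tendsto_nhdsWithin_Ioo_right
    (nonempty_Ioo.mpr one_pos) (M.bddAbove_limsupMaxSpq_image _)

end MoranConstruction

lemma IsMoranSet.exists_moranConstruction {J : Set ℝ} {n : ℕ → ℕ} {c : ℕ → ℝ} {E : Set ℝ}
    (hn : ∀ k : ℕ, 1 ≤ k → 2 ≤ n k) (hc : ∀ k : ℕ, 1 ≤ k → 0 < c k ∧ c k ≤ 1 / (n k : ℝ))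
    (hE : IsMoranSet J n c E) : ∃ M : MoranConstruction, M.n = n ∧ M.c = c ∧ M.limitSet = E := by
  obtain ⟨A, B, hAB, -, a, b, rfl, rfl, hstep, hsep, rfl⟩ := hE
  exact ⟨{ n, c, a, b
           two_le_n := hn
           c_pos := fun k hk => (hc k hk).1
           c_le_inv := fun k hk => (hc k hk).2
           a_lt_b_nil := hAB
           child_subset := fun w hw j h₁ h₂ =>
             ⟨(hstep w hw j h₁ h₂).1, (hstep w hw j h₁ h₂).2.2.1⟩
           child_length := fun w hw j h₁ h₂ => (hstep w hw j h₁ h₂).2.2.2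
           child_disjoint := hsep }, rfl, rfl, rfl⟩

/-- If `n_k ≥ 2`, `c_k ∈ (0, 1/n_k]` and `log c_k / log (c_1 ⋯ c_k) → 0`, then for every
Moran set `E ∈ M(J, {n_k}, {c_k})`,
`dim_qA E = lim_{δ→0} limsup_{q→∞} max_{1 ≤ p ≤ l_{q,δ}} log (n_p ⋯ n_q) / (- log (c_p ⋯ c_q))`. -/
theorem dimqA_moran (J : Set ℝ) (n : ℕ → ℕ) (c : ℕ → ℝ)
    (hn : ∀ k : ℕ, 1 ≤ k → 2 ≤ n k)
    (hc : ∀ k : ℕ, 1 ≤ k → 0 < c k ∧ c k ≤ 1 / (n k : ℝ))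
    (hlim : Filter.Tendsto
      (fun k : ℕ => Real.log (c k) / Real.log (∏ i ∈ Finset.Icc 1 k, c i))
      Filter.atTop (𝓝 0))
    (E : Set ℝ) (hE : IsMoranSet J n c E) :
    Filter.Tendsto (fun δ : ℝ =>
        Filter.limsup (fun q : ℕ =>
          sSup {s : ℝ | ∃ p : ℕ, 1 ≤ p ∧ p ≤ lIdx c δ q ∧ s = spq n c p q})
          Filter.atTop)
      (𝓝[>] (0 : ℝ)) (𝓝 (dimqA E)) := by
  obtain ⟨M, rfl, rfl, rfl⟩ := hE.exists_moranConstruction hn hc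
  exact M.tendsto_limsupMaxSpq_dimqA hlim
end

section
/- Let {n_k}_{k≥1} be integers with n_k ≥ 2 and c_k ∈ (0, 1/n_k] satisfy lim_{k→∞} (log c_k)/(log(c_1⋯c_k)) = 0 and limsup_{k→∞} (log n_k)/(−log c_k) < 1. Then every Moran set E ∈ M(J, {n_k}, {c_k}) is quasi uniformly disconnected. -/
open Filter Topology Metric Set

/-- A set `E ⊆ ℝ` is quasi uniformly disconnected: there is `ψ : ℝ⁺ → ℝ⁺` with `ψ r < r`
and `log ψ(r) / log r → 1` as `r → 0⁺`, and `r* > 0`, such that for every `x ∈ E` and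
`0 < r < r*` there is `E ∩ B(x, ψ r) ⊆ F ⊆ B(x, r)` with `dist(F, E \ F) ≥ ψ r`. -/
def QuasiUniformlyDisconnectedSet (E : Set ℝ) : Prop :=
  ∃ ψ : ℝ → ℝ, (∀ r : ℝ, 0 < r → 0 < ψ r ∧ ψ r < r) ∧
    Filter.Tendsto (fun r => Real.log (ψ r) / Real.log r) (𝓝[>] (0 : ℝ)) (𝓝 1) ∧
    ∃ rstar : ℝ, 0 < rstar ∧ ∀ x ∈ E, ∀ r : ℝ, 0 < r → r < rstar →
      ∃ F : Set ℝ, F ⊆ E ∧ E ∩ Metric.closedBall x (ψ r) ⊆ F ∧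
        F ⊆ Metric.closedBall x r ∧ ∀ y ∈ F, ∀ z ∈ E \ F, ψ r ≤ dist y z

/-!
Let `Δ_k = |J| c_1 ⋯ c_k` be the common length of the level-`k` basic intervals and let `k(r)` be
the first level with `Δ_k ≤ r`. Since `limsup log n_k / (-log c_k) < 1`, eventually
`n_k c_k ≤ θ < 1`, so for a suitable fixed `m` any `m` consecutive levels keep at most a `1/64`
fraction of length. Comparing Lebesgue measures, every interval of length `r / 2` then contains
a point whose `Δ_{k(r)+m}`-neighbourhood misses `E`; two such gaps on either side of `x` cut off
a piece of `E` that is `ψ(r) = Δ_{k(r)+m}`-separated from the rest. Finally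
`log c_k / log Δ_k → 0` gives `log Δ_{k+1} / log Δ_k → 1`, hence `log ψ(r) / log r → 1`.
-/

open MeasureTheory

theorem Filter.Tendsto.div_add_nat_of_div_succ {u : ℕ → ℝ} (hu : ∀ᶠ j in atTop, u j ≠ 0)
    (h : Tendsto (fun j => u (j + 1) / u j) atTop (𝓝 1)) (p : ℕ) :
    Tendsto (fun j => u (j + p) / u j) atTop (𝓝 1) := by
  induction p with
  | zero => exact tendsto_const_nhds.congr' (hu.mono fun j hj => (div_self hj).symm)
  | succ p ih =>
    have hprod := (h.comp (tendsto_add_atTop_nat p)).mul ih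
    rw [one_mul] at hprod
    refine hprod.congr' ((tendsto_add_atTop_nat p).eventually hu |>.mono fun j hj => ?_)
    simp only [Function.comp_apply, ← add_assoc]
    field_simp [hj]

section FirstIndex

noncomputable def firstIndexLE (Δ : ℕ → ℝ) (r : ℝ) : ℕ := sInf {k | Δ k ≤ r}

variable {Δ : ℕ → ℝ} {r : ℝ}

theorem apply_firstIndexLE_le (h0 : Tendsto Δ atTop (𝓝 0)) (hr : 0 < r) :
    Δ (firstIndexLE Δ r) ≤ r :=
  Nat.sInf_mem (h0.eventually (eventually_le_nhds hr)).exists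

theorem lt_apply_of_lt_firstIndexLE {j : ℕ} (hj : j < firstIndexLE Δ r) : r < Δ j :=
  not_le.mp (Nat.notMem_of_lt_sInf hj)

theorem lt_firstIndexLE (hΔ : Antitone Δ) (h0 : Tendsto Δ atTop (𝓝 0)) (hr : 0 < r) {j : ℕ}
    (hrj : r < Δ j) : j < firstIndexLE Δ r :=
  not_le.mp fun h => (hΔ h |>.trans (apply_firstIndexLE_le h0 hr)).not_gt hrj

theorem tendsto_firstIndexLE (hΔ : Antitone Δ) (hpos : ∀ k, 0 < Δ k)
    (h0 : Tendsto Δ atTop (𝓝 0)) : Tendsto (firstIndexLE Δ) (𝓝[>] 0) atTop :=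
  tendsto_atTop.2 fun N => Filter.mem_of_superset (Ioo_mem_nhdsGT (hpos N))
    fun _ hr => (lt_firstIndexLE hΔ h0 hr.1 hr.2).le

theorem tendsto_log_apply_firstIndexLE_add_div_log (hΔ : Antitone Δ) (hpos : ∀ k, 0 < Δ k)
    (h0 : Tendsto Δ atTop (𝓝 0))
    (hshift : ∀ p, Tendsto (fun j => Real.log (Δ (j + p)) / Real.log (Δ j)) atTop (𝓝 1))
    (m : ℕ) :
    Tendsto (fun r => Real.log (Δ (firstIndexLE Δ r + m)) / Real.log r) (𝓝[>] 0) (𝓝 1) := by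
  obtain ⟨j₀, hj₀⟩ := (h0.eventually (eventually_lt_nhds one_pos)).exists
  have hbounds : ∀ r ∈ Ioo 0 (Δ j₀),
      1 ≤ Real.log (Δ (firstIndexLE Δ r + m)) / Real.log r ∧
      Real.log (Δ (firstIndexLE Δ r + m)) / Real.log r ≤
        Real.log (Δ (firstIndexLE Δ r - 1 + (m + 1))) / Real.log (Δ (firstIndexLE Δ r - 1)) := by
    rintro r ⟨hr, hrj₀⟩
    set k := firstIndexLE Δ r
    have hk : j₀ < k := lt_firstIndexLE hΔ h0 hr hrj₀
    have hψr : Real.log (Δ (k + m)) ≤ Real.log r :=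
      Real.log_le_log (hpos _) ((hΔ (Nat.le_add_right k m)).trans (apply_firstIndexLE_le h0 hr))
    have hrk : Real.log r < Real.log (Δ (k - 1)) :=
      Real.log_lt_log hr (lt_apply_of_lt_firstIndexLE (by omega))
    have hk1 : Real.log (Δ (k - 1)) < 0 :=
      Real.log_neg (hpos _) ((hΔ (by omega : j₀ ≤ k - 1)).trans_lt hj₀)
    rw [show k - 1 + (m + 1) = k + m by omega]
    constructor
    · rw [le_div_iff_of_neg (by linarith)]
      linarith
    · rw [← neg_div_neg_eq, ← neg_div_neg_eq (Real.log (Δ (k + m)))]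
      exact div_le_div_of_nonneg_left (by linarith) (by linarith) (by linarith)
  have hupper := (hshift (m + 1)).comp
    ((tendsto_sub_atTop_nat 1).comp (tendsto_firstIndexLE hΔ hpos h0))
  refine tendsto_of_tendsto_of_tendsto_of_le_of_le' tendsto_const_nhds hupper ?_ ?_ <;>
    filter_upwards [Ioo_mem_nhdsGT (hpos j₀)] with r hr
  exacts [(hbounds r hr).1, (hbounds r hr).2]

end FirstIndex

theorem measure_biUnion_le_mul_of_pairwiseDisjoint {α ι : Type*} [MeasurableSpace α]
    (μ : Measure α) {V : Set ι} (hV : V.Countable) {X Y : ι → Set α} {W : Set α} {C : ENNReal}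
    (hY : V.PairwiseDisjoint Y) (hYm : ∀ i ∈ V, MeasurableSet (Y i)) (hYW : ∀ i ∈ V, Y i ⊆ W)
    (hXY : ∀ i ∈ V, μ (X i) ≤ C * μ (Y i)) :
    μ (⋃ i ∈ V, X i) ≤ C * μ W :=
  calc μ (⋃ i ∈ V, X i) ≤ ∑' i : V, μ (X i) := measure_biUnion_le μ hV X
    _ ≤ ∑' i : V, C * μ (Y i) := ENNReal.tsum_le_tsum fun i => hXY i i.2
    _ = C * μ (⋃ i ∈ V, Y i) := by rw [ENNReal.tsum_mul_left, measure_biUnion hV hY hYm]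
    _ ≤ C * μ W := by gcongr; exact iUnion₂_subset hYW

theorem exists_separated_piece_of_gaps {E : Set ℝ} {x r δ qL qR : ℝ} (hδ : δ ≤ r / 2)
    (hqL : qL ∈ Icc (x - r) (x - r / 2)) (hqR : qR ∈ Icc (x + r / 2) (x + r))
    (hgapL : ∀ z ∈ E, δ < |z - qL|) (hgapR : ∀ z ∈ E, δ < |z - qR|) :
    ∃ F ⊆ E, E ∩ closedBall x δ ⊆ F ∧ F ⊆ closedBall x r ∧
      ∀ y ∈ F, ∀ z ∈ E \ F, δ ≤ dist y z := by
  refine ⟨E ∩ Icc qL qR, inter_subset_left, ?_, ?_, ?_⟩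
  · rintro y ⟨hyE, hy⟩
    rw [mem_closedBall, Real.dist_eq, abs_sub_le_iff] at hy
    exact ⟨hyE, by linarith [hqL.2], by linarith [hqR.1]⟩
  · rintro y ⟨-, hy⟩
    rw [mem_closedBall, Real.dist_eq, abs_sub_le_iff]
    constructor <;> linarith [hy.1, hy.2, hqL.1, hqR.2]
  · rintro y ⟨-, hyL, hyR⟩ z ⟨hzE, hzF⟩
    have hL := hgapL z hzE
    have hR := hgapR z hzE
    rw [Real.dist_eq]
    rcases lt_or_ge z qL with hz | hz
    · rw [abs_of_neg (by linarith)] at hL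
      rw [abs_of_pos (by linarith)]
      linarith
    · have hz' : qR < z := not_le.mp fun h => hzF ⟨hzE, hz, h⟩
      rw [abs_of_pos (by linarith)] at hR
      rw [abs_of_neg (by linarith)]
      linarith

theorem eventually_prod_Ico_le {f : ℕ → ℝ} {θ : ℝ} (hf0 : ∀ i, 0 ≤ f i)
    (hθ : θ < 1) (hf : ∀ᶠ i in atTop, f i ≤ θ) {ε : ℝ} (hε : 0 < ε) :
    ∃ m, 1 ≤ m ∧ ∀ᶠ k in atTop, ∏ i ∈ Finset.Ico k (k + m), f i ≤ ε := by
  obtain ⟨K, hK⟩ := eventually_atTop.1 hf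
  obtain ⟨m, hm⟩ := exists_pow_lt_of_lt_one hε hθ
  have hθ0 : 0 ≤ θ := (hf0 K).trans (hK K le_rfl)
  refine ⟨m + 1, by omega, eventually_atTop.2 ⟨K, fun k hk => ?_⟩⟩
  calc ∏ i ∈ Finset.Ico k (k + (m + 1)), f i ≤ ∏ _i ∈ Finset.Ico k (k + (m + 1)), θ :=
        Finset.prod_le_prod (fun i _ => hf0 i)
          (fun i hi => hK i (hk.trans (Finset.mem_Ico.1 hi).1))
    _ = θ ^ (m + 1) := by simp
    _ ≤ θ ^ m := pow_le_pow_of_le_one hθ0 hθ.le (by omega)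
    _ ≤ ε := hm.le

section Words

variable {n : ℕ → ℕ} {v w s : List ℕ} {j : ℕ}

theorem MoranAdmissible.of_append (h : MoranAdmissible n (v ++ s)) : MoranAdmissible n v :=
  fun t ht => List.getD_append v s 0 t ht ▸ h t (by simp; omega)

theorem moranAdmissible_append_singleton_iff :
    MoranAdmissible n (w ++ [j]) ↔ MoranAdmissible n w ∧ 1 ≤ j ∧ j ≤ n (w.length + 1) := by
  refine ⟨fun h => ⟨h.of_append, by simpa using h w.length (by simp)⟩, ?_⟩
  rintro ⟨hw, hj⟩ t ht
  rcases (Nat.lt_succ_iff_lt_or_eq.mp (by simpa using ht)) with ht | rfl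
  · exact List.getD_append w [j] 0 t ht ▸ hw t ht
  · simpa using hj

def levelWords (n : ℕ → ℕ) (k : ℕ) : Set (List ℕ) := {w | MoranAdmissible n w ∧ w.length = k}

theorem take_mem_levelWords {k L : ℕ} (hw : w ∈ levelWords n L) (hk : k ≤ L) :
    w.take k ∈ levelWords n k := by
  have hadm : MoranAdmissible n (w.take k ++ w.drop k) := by rw [List.take_append_drop]; exact hw.1
  exact ⟨hadm.of_append, by simp [hw.2, hk]⟩

theorem exists_child_prefix {L : ℕ} (hw : w ∈ levelWords n L) (hvw : v <+: w)
    (hL : v.length < L) :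
    ∃ j ∈ Finset.Icc 1 (n (v.length + 1)), v ++ [j] <+: w := by
  obtain ⟨s, rfl⟩ := hvw
  obtain _ | ⟨j, s⟩ := s
  · simp [← hw.2] at hL
  have hchild : MoranAdmissible n (v ++ [j] ++ s) := by simpa using hw.1
  exact ⟨j, Finset.mem_Icc.2 (moranAdmissible_append_singleton_iff.1 hchild.of_append).2, s,
    by simp⟩

end Words

structure MoranStructure (n : ℕ → ℕ) (c : ℕ → ℝ) where
  a : List ℕ → ℝ
  b : List ℕ → ℝ
  nil_lt : a [] < b []
  child_le : ∀ w, MoranAdmissible n w → ∀ j, 1 ≤ j → j ≤ n (w.length + 1) →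
    a w ≤ a (w ++ [j]) ∧ b (w ++ [j]) ≤ b w
  child_length : ∀ w, MoranAdmissible n w → ∀ j, 1 ≤ j → j ≤ n (w.length + 1) →
    b (w ++ [j]) - a (w ++ [j]) = c (w.length + 1) * (b w - a w)
  child_disjoint : ∀ w, MoranAdmissible n w → ∀ j j', 1 ≤ j → j ≤ n (w.length + 1) →
    1 ≤ j' → j' ≤ n (w.length + 1) → j ≠ j' →
    Disjoint (Ioo (a (w ++ [j])) (b (w ++ [j]))) (Ioo (a (w ++ [j'])) (b (w ++ [j'])))

namespace MoranStructure

variable {n : ℕ → ℕ} {c : ℕ → ℝ} (M : MoranStructure n c)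

def limitSet : Set ℝ := ⋂ k, ⋃ w ∈ levelWords n k, Icc (M.a w) (M.b w)

noncomputable def levelLength (k : ℕ) : ℝ := (M.b [] - M.a []) * ∏ i ∈ Finset.Icc 1 k, c i

theorem levelLength_succ (k : ℕ) : M.levelLength (k + 1) = c (k + 1) * M.levelLength k := by
  rw [levelLength, levelLength, Finset.prod_Icc_succ_top (by omega)]
  ring

theorem sub_eq_levelLength {w : List ℕ} (hw : MoranAdmissible n w) :
    M.b w - M.a w = M.levelLength w.length := by
  induction w using List.reverseRecOn with
  | nil => simp [levelLength]
  | append_singleton w j ih =>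
    obtain ⟨hw, hj₁, hj₂⟩ := moranAdmissible_append_singleton_iff.1 hw
    rw [M.child_length w hw j hj₁ hj₂, ih hw, List.length_append, List.length_singleton,
      levelLength_succ]

theorem Icc_subset_of_append {v s : List ℕ} (h : MoranAdmissible n (v ++ s)) :
    Icc (M.a (v ++ s)) (M.b (v ++ s)) ⊆ Icc (M.a v) (M.b v) := by
  induction s using List.reverseRecOn with
  | nil => simp
  | append_singleton s j ih =>
    rw [← List.append_assoc] at h ⊢
    obtain ⟨hvs, hj₁, hj₂⟩ := moranAdmissible_append_singleton_iff.1 h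
    exact (Icc_subset_Icc (M.child_le _ hvs j hj₁ hj₂).1 (M.child_le _ hvs j hj₁ hj₂).2).trans
      (ih hvs)

theorem disjoint_Ioo {v w : List ℕ} (hv : MoranAdmissible n v) (hw : MoranAdmissible n w)
    (hlen : v.length = w.length) (hne : v ≠ w) :
    Disjoint (Ioo (M.a v) (M.b v)) (Ioo (M.a w) (M.b w)) := by
  induction v using List.reverseRecOn generalizing w with
  | nil => exact absurd (List.length_eq_zero_iff.1 hlen.symm).symm hne
  | append_singleton v j ih =>
    obtain rfl | ⟨w, j', rfl⟩ := w.eq_nil_or_concat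
    · simp at hlen
    rw [List.concat_eq_append] at hw hne hlen ⊢
    simp only [List.length_append, List.length_singleton, Nat.add_right_cancel_iff] at hlen
    obtain ⟨hv, hj₁, hj₂⟩ := moranAdmissible_append_singleton_iff.1 hv
    obtain ⟨hw, hj₁', hj₂'⟩ := moranAdmissible_append_singleton_iff.1 hw
    by_cases hvw : v = w
    · subst hvw
      exact M.child_disjoint v hv j j' hj₁ hj₂ hj₁' hj₂' fun h => hne (by rw [h])
    · exact (ih hv hw hlen hvw).mono
        (Ioo_subset_Ioo (M.child_le v hv j hj₁ hj₂).1 (M.child_le v hv j hj₁ hj₂).2)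
        (Ioo_subset_Ioo (M.child_le w hw j' hj₁' hj₂').1 (M.child_le w hw j' hj₁' hj₂').2)

theorem exists_mem_levelWords_of_mem_limitSet {z : ℝ} (hz : z ∈ M.limitSet) (k : ℕ) :
    ∃ w ∈ levelWords n k, z ∈ Icc (M.a w) (M.b w) := by
  simpa only [mem_iUnion, exists_prop] using mem_iInter.1 hz k

def descendantsNbhd (L : ℕ) (v : List ℕ) : Set ℝ :=
  ⋃ w ∈ {w ∈ levelWords n L | v <+: w}, Icc (M.a w - M.levelLength L) (M.b w + M.levelLength L)

theorem descendantsNbhd_subset_biUnion {L : ℕ} {v : List ℕ} (hL : v.length < L) :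
    M.descendantsNbhd L v ⊆
      ⋃ j ∈ Finset.Icc 1 (n (v.length + 1)), M.descendantsNbhd L (v ++ [j]) := by
  refine iUnion₂_subset fun w hw => ?_
  obtain ⟨j, hj, hjw⟩ := exists_child_prefix hw.1 hw.2 hL
  have hw' : w ∈ {w ∈ levelWords n L | v ++ [j] <+: w} := ⟨hw.1, hjw⟩
  exact (subset_biUnion_of_mem (u := fun w => Icc (M.a w - M.levelLength L)
    (M.b w + M.levelLength L)) hw').trans
      (subset_biUnion_of_mem (u := fun j => M.descendantsNbhd L (v ++ [j])) hj)

theorem volume_descendantsNbhd_le {L : ℕ} (m : ℕ) {v : List ℕ} (hv : MoranAdmissible n v)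
    (hvL : v.length + m = L) :
    volume (M.descendantsNbhd L v) ≤ ENNReal.ofReal
      (3 * (∏ i ∈ Finset.Ico v.length L, (n (i + 1) : ℝ) * c (i + 1)) * (M.b v - M.a v)) := by
  induction m generalizing v with
  | zero =>
    have hdesc : {w ∈ levelWords n L | v <+: w} = {v} := by
      ext w
      refine ⟨fun hw => (hw.2.eq_of_length (by rw [hw.1.2, ← hvL, add_zero])).symm, ?_⟩
      rintro rfl
      exact ⟨⟨hv, by omega⟩, List.prefix_refl _⟩
    have hlen := M.sub_eq_levelLength hv
    rw [descendantsNbhd, hdesc, biUnion_singleton, Real.volume_Icc, ← hvL, add_zero,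
      Finset.Ico_self, Finset.prod_empty]
    exact le_of_eq (congrArg ENNReal.ofReal (by linarith))
  | succ m ih =>
    set N := n (v.length + 1) with hN
    set P := ∏ i ∈ Finset.Ico (v.length + 1) L, (n (i + 1) : ℝ) * c (i + 1) with hP
    calc volume (M.descendantsNbhd L v)
        ≤ ∑ j ∈ Finset.Icc 1 N, volume (M.descendantsNbhd L (v ++ [j])) :=
          (measure_mono (M.descendantsNbhd_subset_biUnion (by omega))).trans
            (measure_biUnion_finset_le _ _)
      _ ≤ ∑ j ∈ Finset.Icc 1 N, ENNReal.ofReal (3 * P * (c (v.length + 1) * (M.b v - M.a v))) := by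
          refine Finset.sum_le_sum fun j hj => ?_
          have hj' := Finset.mem_Icc.1 hj
          have := ih (moranAdmissible_append_singleton_iff.2 ⟨hv, hj'⟩) (by simp; omega)
          rwa [M.child_length v hv j hj'.1 hj'.2, List.length_append, List.length_singleton] at this
      _ = _ := by
          rw [Finset.sum_const, Nat.card_Icc, Nat.add_sub_cancel, nsmul_eq_mul,
            ← ENNReal.ofReal_natCast, ← ENNReal.ofReal_mul (Nat.cast_nonneg _),
            Finset.prod_eq_prod_Ico_succ_bot (by omega), ← hP, ← hN]
          ring_nf

theorem mem_biUnion_descendantsNbhd {k m : ℕ} {s t z q : ℝ} (hz : z ∈ M.limitSet)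
    (hzst : z ∈ Icc s t) (hzq : |z - q| ≤ M.levelLength (k + m)) :
    q ∈ ⋃ v ∈ {v ∈ levelWords n k | (Icc (M.a v) (M.b v) ∩ Icc s t).Nonempty},
      M.descendantsNbhd (k + m) v := by
  rw [abs_sub_le_iff] at hzq
  obtain ⟨w, hw, hzw⟩ := M.exists_mem_levelWords_of_mem_limitSet hz (k + m)
  have hadm : MoranAdmissible n (w.take k ++ w.drop k) := by rw [List.take_append_drop]; exact hw.1
  have hzv := M.Icc_subset_of_append hadm (by rwa [List.take_append_drop])
  refine mem_biUnion ⟨take_mem_levelWords hw (by omega), z, hzv, hzst⟩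
    (mem_biUnion ⟨hw, List.take_prefix k w⟩ ?_)
  exact ⟨by linarith [hzw.1], by linarith [hzw.2]⟩

section Scales

variable (hc : ∀ k, 1 ≤ k → 0 < c k ∧ c k ≤ 1 / 2)
include hc

theorem levelLength_pos (k : ℕ) : 0 < M.levelLength k :=
  mul_pos (sub_pos.2 M.nil_lt) (Finset.prod_pos fun i hi => (hc i (Finset.mem_Icc.1 hi).1).1)

theorem levelLength_succ_le_half (k : ℕ) : M.levelLength (k + 1) ≤ M.levelLength k / 2 := by
  rw [levelLength_succ]
  nlinarith [M.levelLength_pos hc k, (hc (k + 1) (by omega)).2]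

theorem levelLength_antitone : Antitone M.levelLength :=
  antitone_nat_of_succ_le fun k => by
    linarith [M.levelLength_succ_le_half hc k, M.levelLength_pos hc k]

theorem levelLength_add_le_half {k m : ℕ} (hm : 1 ≤ m) :
    M.levelLength (k + m) ≤ M.levelLength k / 2 :=
  (M.levelLength_antitone hc (by omega)).trans (M.levelLength_succ_le_half hc k)

theorem tendsto_levelLength : Tendsto M.levelLength atTop (𝓝 0) := by
  have hgeom : ∀ k, M.levelLength k ≤ M.levelLength 0 * (1 / 2) ^ k := by
    intro k
    induction k with
    | zero => simp
    | succ k ih => rw [pow_succ]; linarith [M.levelLength_succ_le_half hc k]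
  have hlim := (tendsto_pow_atTop_nhds_zero_of_lt_one (by norm_num : (0 : ℝ) ≤ 1 / 2)
    (by norm_num)).const_mul (M.levelLength 0)
  rw [mul_zero] at hlim
  exact squeeze_zero (fun k => (M.levelLength_pos hc k).le) hgeom hlim

theorem volume_biUnion_descendantsNbhd_le {k m : ℕ}
    (hθ : ∏ i ∈ Finset.Ico k (k + m), (n (i + 1) : ℝ) * c (i + 1) ≤ 1 / 64) (s t : ℝ) :
    volume (⋃ v ∈ {v ∈ levelWords n k | (Icc (M.a v) (M.b v) ∩ Icc s t).Nonempty},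
        M.descendantsNbhd (k + m) v) ≤
      ENNReal.ofReal (3 / 64 * (t + M.levelLength k - (s - M.levelLength k))) := by
  rw [ENNReal.ofReal_mul (by norm_num), ← Real.volume_Icc]
  refine measure_biUnion_le_mul_of_pairwiseDisjoint volume (Set.to_countable _)
    (Y := fun v => Ioo (M.a v) (M.b v))
    (fun v hv w hw hne => M.disjoint_Ioo hv.1.1 hw.1.1 (hv.1.2.trans hw.1.2.symm) hne)
    (fun _ _ => measurableSet_Ioo) (fun v hv => ?_) (fun v hv => ?_)
  · obtain ⟨y, hy, hyst⟩ := hv.2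
    have hlen : M.b v - M.a v = M.levelLength k := by rw [M.sub_eq_levelLength hv.1.1, hv.1.2]
    exact fun x hx => ⟨by linarith [hx.1, hy.2, hyst.1], by linarith [hx.2, hy.1, hyst.2]⟩
  · have hvol := M.volume_descendantsNbhd_le m hv.1.1 (by rw [hv.1.2])
    rw [hv.1.2] at hvol
    refine hvol.trans ?_
    rw [Real.volume_Ioo, ← ENNReal.ofReal_mul (by norm_num)]
    gcongr
    · rw [M.sub_eq_levelLength hv.1.1]; exact (M.levelLength_pos hc _).le
    · linarith

theorem exists_gap {k m : ℕ}
    (hθ : ∏ i ∈ Finset.Ico k (k + m), (n (i + 1) : ℝ) * c (i + 1) ≤ 1 / 64) {r : ℝ}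
    (hr : M.levelLength k ≤ r) (u : ℝ) :
    ∃ q ∈ Icc u (u + r / 2), ∀ z ∈ M.limitSet, M.levelLength (k + m) < |z - q| := by
  set D := M.levelLength (k + m)
  have hD : 0 < D := M.levelLength_pos hc _
  have hDk : D ≤ M.levelLength k := M.levelLength_antitone hc (Nat.le_add_right k m)
  have hlt : volume (⋃ v ∈ {v ∈ levelWords n k |
        (Icc (M.a v) (M.b v) ∩ Icc (u - D) (u + r / 2 + D)).Nonempty},
        M.descendantsNbhd (k + m) v) < volume (Icc u (u + r / 2)) := by
    refine (M.volume_biUnion_descendantsNbhd_le hc hθ _ _).trans_lt ?_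
    rw [Real.volume_Icc, ENNReal.ofReal_lt_ofReal_iff (by linarith)]
    linarith
  obtain ⟨q, hq, hqbad⟩ := not_subset.1 fun h => (measure_mono h).not_gt hlt
  refine ⟨q, hq, fun z hz => not_le.1 fun hzq => hqbad (M.mem_biUnion_descendantsNbhd hz ?_ hzq)⟩
  rw [abs_sub_le_iff] at hzq
  exact ⟨by linarith [hq.1], by linarith [hq.2]⟩

theorem tendsto_log_levelLength_add_div_log
    (hlim : Tendsto (fun k => Real.log (c k) / Real.log (∏ i ∈ Finset.Icc 1 k, c i)) atTop
      (𝓝 0)) (p : ℕ) :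
    Tendsto (fun j => Real.log (M.levelLength (j + p)) / Real.log (M.levelLength j)) atTop
      (𝓝 1) := by
  set L := fun j => Real.log (M.levelLength j)
  set C := Real.log (M.b [] - M.a [])
  have hL : Tendsto L atTop atBot := Real.tendsto_log_nhdsGT_zero.comp
    (tendsto_nhdsWithin_iff.2 ⟨M.tendsto_levelLength hc,
      Eventually.of_forall (M.levelLength_pos hc)⟩)
  have hsplit : ∀ j, Real.log (∏ i ∈ Finset.Icc 1 j, c i) = L j - C := fun j => by
    rw [eq_sub_iff_add_eq']
    exact (Real.log_mul (sub_pos.2 M.nil_lt).ne'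
      (Finset.prod_pos fun i hi => (hc i (Finset.mem_Icc.1 hi).1).1).ne').symm
  have hρ : Tendsto (fun j => Real.log (c j) / L j) atTop (𝓝 0) := by
    have hratio : Tendsto (fun j => 1 - C / L j) atTop (𝓝 1) := by
      simpa using tendsto_const_nhds.sub (tendsto_const_nhds.div_atBot hL)
    have hprod := hlim.mul hratio
    rw [zero_mul] at hprod
    refine hprod.congr' ?_
    filter_upwards [hL.eventually (eventually_lt_atBot (min C 0))] with j hj
    have hL0 : L j ≠ 0 := (hj.trans_le (min_le_right _ _)).ne
    have hP0 : L j - C ≠ 0 := sub_ne_zero.2 (hj.trans_le (min_le_left _ _)).ne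
    rw [hsplit]
    field_simp
  have hsucc : ∀ j, L j = L (j + 1) - Real.log (c (j + 1)) := fun j => by
    simp only [L, M.levelLength_succ, Real.log_mul (hc (j + 1) (by omega)).1.ne'
      (M.levelLength_pos hc j).ne', add_sub_cancel_left]
  have hpred : Tendsto (fun j => L j / L (j + 1)) atTop (𝓝 1) := by
    refine (by simpa using tendsto_const_nhds.sub (hρ.comp (tendsto_add_atTop_nat 1)) :
      Tendsto (fun j => 1 - Real.log (c (j + 1)) / L (j + 1)) atTop (𝓝 1)).congr' ?_
    filter_upwards [(tendsto_add_atTop_nat 1).eventually (hL.eventually (eventually_lt_atBot 0))]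
      with j hj
    rw [hsucc j, sub_div, div_self hj.ne]
  exact (by simpa using hpred.inv₀ one_ne_zero : Tendsto (fun j => L (j + 1) / L j) atTop (𝓝 1))
    |>.div_add_nat_of_div_succ ((hL.eventually (eventually_lt_atBot 0)).mono fun _ h => h.ne) p

end Scales

end MoranStructure

theorem exists_lt_one_eventually_mul_le {n : ℕ → ℕ} {c : ℕ → ℝ}
    (hn : ∀ k, 1 ≤ k → 2 ≤ n k) (hc : ∀ k, 1 ≤ k → 0 < c k ∧ c k ≤ 1 / (n k : ℝ))
    (hsup : limsup (fun k => Real.log (n k : ℝ) / (-Real.log (c k))) atTop < 1) :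
    ∃ θ < 1, ∀ᶠ k in atTop, (n k : ℝ) * c k ≤ θ := by
  have hpos : ∀ k, 1 ≤ k → (0 : ℝ) < n k := fun k hk => by
    have := hn k hk
    positivity
  have hmul : ∀ k, 1 ≤ k → (n k : ℝ) * c k ≤ 1 := fun k hk =>
    (mul_le_mul_of_nonneg_left (hc k hk).2 (hpos k hk).le).trans_eq
      (mul_one_div_cancel (hpos k hk).ne')
  have hlogc : ∀ k, 1 ≤ k → Real.log (c k) ≤ Real.log (1 / 2) := fun k hk =>
    Real.log_le_log (hc k hk).1 ((hc k hk).2.trans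
      (one_div_le_one_div_of_le two_pos (by exact_mod_cast hn k hk)))
  have hlog_mul : ∀ k, 1 ≤ k → Real.log ((n k : ℝ) * c k) = Real.log (n k) + Real.log (c k) :=
    fun k hk => Real.log_mul (hpos k hk).ne' (hc k hk).1.ne'
  have hneg : ∀ k, 1 ≤ k → 0 < -Real.log (c k) := fun k hk => by
    linarith [hlogc k hk, Real.log_neg (by norm_num : (0 : ℝ) < 1 / 2) (by norm_num)]
  have hbdd : IsBoundedUnder (· ≤ ·) atTop fun k => Real.log (n k : ℝ) / (-Real.log (c k)) := by
    refine isBoundedUnder_of_eventually_le (a := 1) ?_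
    filter_upwards [eventually_ge_atTop 1] with k hk
    rw [div_le_one (hneg k hk)]
    linarith [Real.log_nonpos (mul_pos (hpos k hk) (hc k hk).1).le (hmul k hk), hlog_mul k hk]
  -- with `γ ∈ (limsup, 1)`: `n_k c_k = exp (log n_k + log c_k) ≤ exp ((1 - γ) log c_k)`
  set γ := (limsup (fun k => Real.log (n k : ℝ) / (-Real.log (c k))) atTop + 1) / 2 with hγ
  have hγ1 : γ < 1 := by linarith
  refine ⟨Real.exp ((1 - γ) * Real.log (1 / 2)), Real.exp_lt_one_iff.2 (mul_neg_of_pos_of_neg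
    (by linarith) (Real.log_neg (by norm_num) (by norm_num))), ?_⟩
  filter_upwards [eventually_lt_of_limsup_lt (b := γ) (by linarith) hbdd, eventually_ge_atTop 1]
    with k hk hk1
  rw [div_lt_iff₀ (hneg k hk1)] at hk
  rw [← Real.exp_log (mul_pos (hpos k hk1) (hc k hk1).1), hlog_mul k hk1, Real.exp_le_exp]
  nlinarith [mul_le_mul_of_nonneg_left (hlogc k hk1) (by linarith : (0 : ℝ) ≤ 1 - γ)]

theorem IsMoranSet.exists_moranStructure {J : Set ℝ} {n : ℕ → ℕ} {c : ℕ → ℝ} {E : Set ℝ}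
    (hE : IsMoranSet J n c E) : ∃ M : MoranStructure n c, E = M.limitSet := by
  obtain ⟨A, B, hAB, -, a, b, rfl, rfl, hchild, hdisj, rfl⟩ := hE
  refine ⟨⟨a, b, hAB, fun w hw j h₁ h₂ => ⟨(hchild w hw j h₁ h₂).1, (hchild w hw j h₁ h₂).2.2.1⟩,
    fun w hw j h₁ h₂ => (hchild w hw j h₁ h₂).2.2.2, fun w hw j j' h₁ h₂ h₁' h₂' hne => ?_⟩, rfl⟩
  rw [Set.disjoint_iff_inter_eq_empty, ← interior_Icc, ← interior_Icc]
  exact hdisj w hw j j' h₁ h₂ h₁' h₂' hne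

/-- If `n_k ≥ 2`, `c_k ∈ (0, 1/n_k]`, `log c_k / log (c_1 ⋯ c_k) → 0` and
`limsup_k log n_k / (- log c_k) < 1`, then every Moran set `E ∈ M(J, {n_k}, {c_k})` is
quasi uniformly disconnected. -/
theorem moran_quasiUniformlyDisconnected (J : Set ℝ) (n : ℕ → ℕ) (c : ℕ → ℝ)
    (hn : ∀ k : ℕ, 1 ≤ k → 2 ≤ n k)
    (hc : ∀ k : ℕ, 1 ≤ k → 0 < c k ∧ c k ≤ 1 / (n k : ℝ))
    (hlim : Filter.Tendsto
      (fun k : ℕ => Real.log (c k) / Real.log (∏ i ∈ Finset.Icc 1 k, c i))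
      Filter.atTop (𝓝 0))
    (hsup : Filter.limsup (fun k : ℕ => Real.log (n k : ℝ) / (-Real.log (c k)))
      Filter.atTop < 1)
    (E : Set ℝ) (hE : IsMoranSet J n c E) :
    QuasiUniformlyDisconnectedSet E := by
  obtain ⟨M, rfl⟩ := hE.exists_moranStructure
  have hc₂ : ∀ k, 1 ≤ k → 0 < c k ∧ c k ≤ 1 / 2 := fun k hk => ⟨(hc k hk).1,
    (hc k hk).2.trans (one_div_le_one_div_of_le two_pos (by exact_mod_cast hn k hk))⟩
  obtain ⟨θ, hθ1, hθ⟩ := exists_lt_one_eventually_mul_le hn hc hsup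
  obtain ⟨m, hm, hprod⟩ := eventually_prod_Ico_le (f := fun i => (n (i + 1) : ℝ) * c (i + 1))
    (fun i => mul_nonneg (Nat.cast_nonneg _) (hc₂ (i + 1) (by omega)).1.le) hθ1
    ((tendsto_add_atTop_nat 1).eventually hθ) (by norm_num : (0 : ℝ) < 1 / 64)
  obtain ⟨k₀, hk₀⟩ := eventually_atTop.1 hprod
  set Δ := M.levelLength
  have hpos := M.levelLength_pos hc₂
  have hanti := M.levelLength_antitone hc₂
  have h0 := M.tendsto_levelLength hc₂
  refine ⟨fun r => Δ (firstIndexLE Δ r + m), fun r hr => ⟨hpos _, ?_⟩,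
    tendsto_log_apply_firstIndexLE_add_div_log hanti hpos h0
      (M.tendsto_log_levelLength_add_div_log hc₂ hlim) m,
    Δ k₀, hpos k₀, ?_⟩
  · linarith [M.levelLength_add_le_half hc₂ hm (k := firstIndexLE Δ r), hpos (firstIndexLE Δ r),
      apply_firstIndexLE_le h0 hr]
  rintro x - r hr hrk₀
  set k := firstIndexLE Δ r
  have hk : Δ k ≤ r := apply_firstIndexLE_le h0 hr
  have hθk := hk₀ k (lt_firstIndexLE hanti h0 hr hrk₀).le
  obtain ⟨qL, hqL, hgapL⟩ := M.exists_gap hc₂ hθk hk (x - r)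
  obtain ⟨qR, hqR, hgapR⟩ := M.exists_gap hc₂ hθk hk (x + r / 2)
  exact exists_separated_piece_of_gaps (by linarith [M.levelLength_add_le_half hc₂ hm (k := k)])
    ⟨hqL.1, by linarith [hqL.2]⟩ ⟨hqR.1, by linarith [hqR.2]⟩ hgapL hgapR
end

section
/- Fix 0 < α < 1 and set a_k = ∏_{i=1}^{k} (1 − (i+1)^{−α}) for k ≥ 1. Then the compact set E = {0, 1, a_1, a_2, …} ⊂ ℝ is NOT uniformly disconnected. -/
open Filter Topology Metric Set

/-- `a_k = ∏_{i=1}^k (1 - (i+1)^(-α))`; note `a_0 = 1` (empty product). -/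
noncomputable def aSeq (α : ℝ) (k : ℕ) : ℝ :=
  ∏ i ∈ Finset.Icc 1 k, (1 - ((i : ℝ) + 1) ^ (-α))

/-- The countable compact set `E = {0, 1, a_1, a_2, …}`. -/
noncomputable def aSet (α : ℝ) : Set ℝ :=
  insert (0 : ℝ) (insert 1 {x : ℝ | ∃ k : ℕ, 1 ≤ k ∧ x = aSeq α k})

/-- A set `E ⊆ ℝ` is uniformly disconnected: there are `0 < c < 1` and `r* > 0` such that
for every `x ∈ E` and `0 < r < r*` there is `E ∩ B(x, cr) ⊆ F ⊆ B(x, r)` with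
`dist(F, E \ F) ≥ cr`. -/
def UniformlyDisconnectedSet (E : Set ℝ) : Prop :=
  ∃ c : ℝ, 0 < c ∧ c < 1 ∧ ∃ rstar : ℝ, 0 < rstar ∧
    ∀ x ∈ E, ∀ r : ℝ, 0 < r → r < rstar →
      ∃ F : Set ℝ, F ⊆ E ∧ E ∩ Metric.closedBall x (c * r) ⊆ F ∧
        F ⊆ Metric.closedBall x r ∧ ∀ y ∈ F, ∀ z ∈ E \ F, c * r ≤ dist y z

private lemma aSeq_zero (α : ℝ) : aSeq α 0 = 1 := by simp [aSeq]

private lemma aSeq_succ (α : ℝ) (k : ℕ) :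
    aSeq α (k + 1) = aSeq α k * (1 - ((k : ℝ) + 2) ^ (-α)) := by
  have h : (((k + 1 : ℕ)) : ℝ) + 1 = (k : ℝ) + 2 := by push_cast; ring
  rw [aSeq, Finset.prod_Icc_succ_top (Nat.le_add_left 1 k), h]
  rfl

private lemma tfac_pos (α : ℝ) (k : ℕ) : 0 < ((k : ℝ) + 2) ^ (-α) :=
  Real.rpow_pos_of_pos (by positivity) _

private lemma tfac_lt_one (α : ℝ) (hα0 : 0 < α) (k : ℕ) : ((k : ℝ) + 2) ^ (-α) < 1 :=
  Real.rpow_lt_one_of_one_lt_of_neg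
    (by have := Nat.cast_nonneg (α := ℝ) k; linarith) (by linarith)

private lemma aSeq_pos (α : ℝ) (hα0 : 0 < α) (k : ℕ) : 0 < aSeq α k := by
  induction k with
  | zero => simp [aSeq_zero]
  | succ n ih =>
      rw [aSeq_succ]
      have h1 := tfac_lt_one α hα0 n
      have := tfac_pos α n
      nlinarith

private lemma aSeq_strictAnti (α : ℝ) (hα0 : 0 < α) : StrictAnti (aSeq α) := by
  apply strictAnti_nat_of_succ_lt
  intro n
  rw [aSeq_succ]
  have h1 := tfac_lt_one α hα0 n
  have h2 := tfac_pos α n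
  have h3 := aSeq_pos α hα0 n
  nlinarith

private lemma aSeq_le (α : ℝ) (hα0 : 0 < α) (hα1 : α ≤ 1) (k : ℕ) :
    aSeq α k ≤ 1 / ((k : ℝ) + 1) := by
  induction k with
  | zero => simp [aSeq_zero]
  | succ n ih =>
      rw [aSeq_succ]
      have hbase : (1 : ℝ) ≤ (n : ℝ) + 2 := by
        have := Nat.cast_nonneg (α := ℝ) n; linarith
      have h1 : ((n : ℝ) + 2) ^ (-1 : ℝ) ≤ ((n : ℝ) + 2) ^ (-α) :=
        Real.rpow_le_rpow_of_exponent_le hbase (by linarith)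
      rw [Real.rpow_neg_one] at h1
      have h2 : 1 - ((n : ℝ) + 2) ^ (-α) ≤ 1 - ((n : ℝ) + 2)⁻¹ := by linarith
      have h3 : (0 : ℝ) ≤ 1 - ((n : ℝ) + 2) ^ (-α) := by
        have := tfac_lt_one α hα0 n; linarith
      have h4 := aSeq_pos α hα0 n
      calc aSeq α n * (1 - ((n : ℝ) + 2) ^ (-α))
          ≤ (1 / ((n : ℝ) + 1)) * (1 - ((n : ℝ) + 2)⁻¹) := by
            apply mul_le_mul ih h2 h3
            positivity
        _ = 1 / ((((n + 1) : ℕ) : ℝ) + 1) := by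
            push_cast
            rw [inv_eq_one_div]
            field_simp
            ring

private lemma aSeq_mem (α : ℝ) (m : ℕ) : aSeq α m ∈ aSet α := by
  rcases Nat.eq_zero_or_pos m with h | h
  · subst h; rw [aSeq_zero]; exact Set.mem_insert_of_mem _ (Set.mem_insert _ _)
  · exact Set.mem_insert_of_mem _ (Set.mem_insert_of_mem _ ⟨m, h, rfl⟩)

/-- For `0 < α < 1` and `a_k = ∏_{i=1}^k (1 - (i+1)^(-α))`, the compact set
`E = {0, 1, a_1, a_2, …}` is not uniformly disconnected. -/
theorem aSet_not_uniformlyDisconnected (α : ℝ) (hα0 : 0 < α) (hα1 : α < 1) :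
    ¬ UniformlyDisconnectedSet (aSet α) := by
  classical
  rintro ⟨c, hc0, hc1, rstar, hrs, H⟩
  set ε : ℝ := c / (1 + c) with hεdef
  have hε : 0 < ε := by positivity
  -- choose N with ((n:ℝ)+2)^(-α) < ε for all n ≥ N
  obtain ⟨N, hN⟩ := exists_nat_gt (ε ^ (-1 / α))
  have hNbound : ∀ n : ℕ, N ≤ n → ((n : ℝ) + 2) ^ (-α) < ε := by
    intro n hn
    have hpow : (0 : ℝ) < ε ^ (-1 / α) := Real.rpow_pos_of_pos hε _
    have hbase : ε ^ (-1 / α) < (n : ℝ) + 2 := by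
      have : (N : ℝ) ≤ n := Nat.cast_le.mpr hn
      linarith
    have h1 : (ε ^ (-1 / α)) ^ α < ((n : ℝ) + 2) ^ α :=
      Real.rpow_lt_rpow (le_of_lt hpow) hbase hα0
    have h2 : (ε ^ (-1 / α)) ^ α = ε⁻¹ := by
      rw [← Real.rpow_mul (le_of_lt hε)]
      have : (-1 / α) * α = -1 := by field_simp
      rw [this, Real.rpow_neg_one]
    rw [h2] at h1
    have h3 : ((n : ℝ) + 2) ^ (-α) = (((n : ℝ) + 2) ^ α)⁻¹ := by
      rw [← Real.rpow_neg (by positivity)]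
    rw [h3]
    have h4 : (((n : ℝ) + 2) ^ α)⁻¹ < (ε⁻¹)⁻¹ :=
      inv_strictAnti₀ (by positivity) h1
    rwa [inv_inv] at h4
  -- choose the radius
  set δ : ℝ := min rstar (min 1 (aSeq α N)) with hδdef
  have hδ : 0 < δ := by
    have := aSeq_pos α hα0 N
    simp only [hδdef, lt_min_iff]
    exact ⟨hrs, by norm_num, this⟩
  set r : ℝ := δ / 2 with hrdef
  have hr0 : 0 < r := by positivity
  have hrlt : r < rstar := by
    have h1 : δ ≤ rstar := min_le_left _ _
    simp only [hrdef]; linarith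
  have hrN : r < aSeq α N := by
    have h1 : δ ≤ aSeq α N := le_trans (min_le_right _ _) (min_le_right _ _)
    simp only [hrdef]; linarith
  -- choose K with a_K ≤ c*r
  obtain ⟨k, hk⟩ := exists_nat_gt (1 / (c * r))
  set K : ℕ := k + 1 with hKdef
  have hKle : aSeq α K ≤ c * r := by
    have h1 : aSeq α K ≤ 1 / ((K : ℝ) + 1) := aSeq_le α hα0 (le_of_lt hα1) K
    have h2 : (1 : ℝ) / ((K : ℝ) + 1) < c * r := by
      rw [div_lt_iff₀ (by positivity)]
      have h3 : 1 / (c * r) < (K : ℝ) + 1 := by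
        have : (k : ℝ) ≤ (K : ℝ) := by simp [hKdef]
        linarith
      rw [div_lt_iff₀ (by positivity)] at h3
      nlinarith
    linarith
  -- apply uniform disconnectedness at x = 0
  obtain ⟨F, hFE, hFsub, hFball, hsep⟩ :=
    H 0 (Set.mem_insert 0 _) r hr0 hrlt
  -- a_K ∈ F
  have hKF : aSeq α K ∈ F := by
    apply hFsub
    refine ⟨aSeq_mem α K, ?_⟩
    rw [Metric.mem_closedBall, Real.dist_eq, sub_zero,
      abs_of_pos (aSeq_pos α hα0 K)]
    exact hKle
  -- least index in F
  have hex : ∃ j, aSeq α j ∈ F := ⟨K, hKF⟩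
  have hjF : aSeq α (Nat.find hex) ∈ F := Nat.find_spec hex
  have hjr : aSeq α (Nat.find hex) ≤ r := by
    have := hFball hjF
    rw [Metric.mem_closedBall, Real.dist_eq, sub_zero,
      abs_of_pos (aSeq_pos α hα0 _)] at this
    exact this
  have hjN : N < Nat.find hex := by
    by_contra h
    push_neg at h
    have : aSeq α N ≤ aSeq α (Nat.find hex) := (aSeq_strictAnti α hα0).antitone h
    linarith
  -- write Nat.find hex = m + 1
  obtain ⟨m, hm⟩ : ∃ m, Nat.find hex = m + 1 := ⟨Nat.find hex - 1, by omega⟩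
  rw [hm] at hjF hjr
  have hmN : N ≤ m := by omega
  have hmF : aSeq α m ∉ F := Nat.find_min hex (by omega)
  have hsep' := hsep (aSeq α (m + 1)) hjF (aSeq α m) ⟨aSeq_mem α m, hmF⟩
  -- derive the contradiction
  set t : ℝ := ((m : ℝ) + 2) ^ (-α) with htdef
  have ht1 : t < ε := hNbound m hmN
  have ht0 : 0 < t := tfac_pos α m
  have hrec : aSeq α (m + 1) = aSeq α m * (1 - t) := aSeq_succ α m
  have hma : 0 < aSeq α m := aSeq_pos α hα0 m
  have hdist : dist (aSeq α (m + 1)) (aSeq α m) = aSeq α m * t := by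
    rw [Real.dist_eq, hrec, abs_of_nonpos (by nlinarith)]
    ring
  rw [hdist] at hsep'
  -- but a_m * t < c * a_m * (1-t) = c * a_{m+1} ≤ c * r
  have hkey : t * (1 + c) < c := by
    rw [hεdef, lt_div_iff₀ (by linarith)] at ht1
    linarith
  have hj1 : aSeq α (m + 1) ≤ r := hjr
  nlinarith [mul_pos hc0 hr0]
end
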